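/- arXiv:cs/0702018 — 4 statements merged into one kernel-verified Lean document; each statement's English description precedes it below -/
import Mathlib

section
/- Let (Xₙ; n≥1) be a stationary and ergodic source with X₁ ∼ P and let {Q_θ : θ ∈ Θ} be an arbitrary family of probability measures on the reproduction alphabet Â. Then for each D ∈ D_c^Θ(P), with probability 1, limsup_{n→∞} R₁^Θ(P_{X₁ⁿ}, D) ≤ R₁^Θ(P, D). -/
open MeasureTheory ProbabilityTheory Filter Topology Set
open scoped ENNReal NNReal

noncomputable section

open scoped Classical in
/-- Relative entropy `H(μ‖ν)`, with values in `ℝ≥0∞` and the convention that it is `∞`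
unless `μ ≪ ν` and the log-likelihood ratio is integrable. -/
def relEnt {X : Type*} [MeasurableSpace X] (μ ν : Measure X) : ℝ≥0∞ :=
  if μ ≪ ν ∧ Integrable (llr μ ν) μ then ENNReal.ofReal (∫ x, llr μ ν x ∂μ) else ⊤

/-- The set `W(P,D)` of couplings with first marginal `P` and expected distortion at most `D`. -/
def Wset {A B : Type*} [MeasurableSpace A] [MeasurableSpace B]
    (ρ : A → B → ℝ) (P : Measure A) (D : ℝ) : Set (Measure (A × B)) :=
  {W | IsProbabilityMeasure W ∧ W.fst = P ∧
    ∫⁻ p, ENNReal.ofReal (ρ p.1 p.2) ∂W ≤ ENNReal.ofReal D}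

/-- `R₁(P,Q,D) := inf_{W ∈ W(P,D)} H(W ‖ P × Q)`, with `inf ∅ = ∞`. -/
def RQ {A B : Type*} [MeasurableSpace A] [MeasurableSpace B]
    (ρ : A → B → ℝ) (P : Measure A) (Q : Measure B) (D : ℝ) : ℝ≥0∞ :=
  ⨅ W ∈ Wset ρ P D, relEnt W (P.prod Q)

/-- `R₁^Θ(P,D) := inf_θ R₁(P,Q_θ,D)`. -/
def RTh {A B Θ : Type*} [MeasurableSpace A] [MeasurableSpace B]
    (ρ : A → B → ℝ) (Q : Θ → Measure B) (P : Measure A) (D : ℝ) : ℝ≥0∞ :=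
  ⨅ θ : Θ, RQ ρ P (Q θ) D

/-- The (first-order) rate-distortion function
`R₁(P,D) := inf_{W ∈ W(P,D)} H(W ‖ W^A × W^Â)`, with `inf ∅ = ∞`. -/
def Rnp {A B : Type*} [MeasurableSpace A] [MeasurableSpace B]
    (ρ : A → B → ℝ) (P : Measure A) (D : ℝ) : ℝ≥0∞ :=
  ⨅ W ∈ Wset ρ P D, relEnt W (W.fst.prod W.snd)

/-- The empirical distribution of `(x 0, …, x (n-1))`. -/
def empMeas {A : Type*} [MeasurableSpace A] (x : ℕ → A) (n : ℕ) : Measure A :=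
  (n : ℝ≥0∞)⁻¹ • ∑ k ∈ Finset.range n, Measure.dirac (x k)

/-- The shift map on sequences. -/
def shift {A : Type*} : (ℕ → A) → (ℕ → A) := fun x n => x (n + 1)

/-- `D_c^Θ(P)`: the set of distortion levels where `D ↦ R₁^Θ(P,D)` is continuous from the
left (the left limit being the infimum over `λ ∈ (0,1)` of `R₁^Θ(P,λD)`, by monotonicity),
with the conventions that `0 ∈ D_c^Θ(P)` and that `D ∈ D_c^Θ(P)` whenever `R₁^Θ(P,D) = ∞`. -/
def DcTh {A B Θ : Type*} [MeasurableSpace A] [MeasurableSpace B]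
    (ρ : A → B → ℝ) (Q : Θ → Measure B) (P : Measure A) : Set ℝ :=
  {D | 0 ≤ D ∧ (D = 0 ∨ RTh ρ Q P D = ⊤ ∨
    RTh ρ Q P D = ⨅ l ∈ Set.Ioo (0:ℝ) 1, RTh ρ Q P (l * D))}

/-- `D_c(P)` for the rate-distortion function. -/
def DcNp {A B : Type*} [MeasurableSpace A] [MeasurableSpace B]
    (ρ : A → B → ℝ) (P : Measure A) : Set ℝ :=
  {D | 0 ≤ D ∧ (D = 0 ∨ Rnp ρ P D = ⊤ ∨
    Rnp ρ P D = ⨅ l ∈ Set.Ioo (0:ℝ) 1, Rnp ρ P (l * D))}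

/-- `D_c(P,Q)` for `R₁(P,Q,·)`. -/
def DcQ {A B : Type*} [MeasurableSpace A] [MeasurableSpace B]
    (ρ : A → B → ℝ) (P : Measure A) (Q : Measure B) : Set ℝ :=
  {D | 0 ≤ D ∧ (D = 0 ∨ RQ ρ P Q D = ⊤ ∨
    RQ ρ P Q D = ⨅ l ∈ Set.Ioo (0:ℝ) 1, RQ ρ P Q (l * D))}

/-- The union of distortion balls of radius `M` centered at points of `K`. -/
def Bset {A B : Type*} (ρ : A → B → ℝ) (K : Set A) (M : ℝ) : Set B :=
  {y | ∃ x ∈ K, ρ x y ≤ M}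



/-- Two nonnegative sequences related by `n * b n = (n+1) * a (n+1) - C` have the same
`limsup` after `ENNReal.ofReal`. -/
private lemma limsup_ofReal_rel {a b : ℕ → ℝ} {C : ℝ}
    (ha : ∀ n, 0 ≤ a n) (hC : 0 ≤ C)
    (hrel : ∀ n : ℕ, 1 ≤ n → (n : ℝ) * b n = ((n : ℝ) + 1) * a (n + 1) - C) :
    limsup (fun n => ENNReal.ofReal (b n)) atTop
      = limsup (fun n => ENNReal.ofReal (a n)) atTop := by
  set A := limsup (fun n => ENNReal.ofReal (a n)) atTop with hA
  set B := limsup (fun n => ENNReal.ofReal (b n)) atTop with hB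
  have hb_le : ∀ n : ℕ, 1 ≤ n → ∀ s : ℝ, 0 ≤ s → a (n + 1) ≤ s → b n ≤ s + s / n := by
    intro n hn s hs hns
    have hn0 : (0:ℝ) < n := by positivity
    have h1 : (n : ℝ) * b n ≤ ((n : ℝ) + 1) * s := by
      rw [hrel n hn]
      nlinarith [mul_le_mul_of_nonneg_left hns (by positivity : (0:ℝ) ≤ (n:ℝ)+1)]
    have h2 : b n ≤ ((n:ℝ)+1)*s/n := by
      rw [le_div_iff₀ hn0]; linarith
    refine h2.trans (le_of_eq ?_)
    field_simp
  have ha_le : ∀ n : ℕ, 1 ≤ n → ∀ s : ℝ, 0 ≤ s → b n ≤ s → a (n + 1) ≤ s + C / (n + 1) := by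
    intro n hn s hs hns
    have hn0 : (0:ℝ) < n := by positivity
    have h1 : ((n : ℝ) + 1) * a (n + 1) = (n : ℝ) * b n + C := by
      rw [hrel n hn]; ring
    have h2 : ((n : ℝ) + 1) * a (n + 1) ≤ (n : ℝ) * s + C := by
      rw [h1]
      have : (n:ℝ) * b n ≤ (n:ℝ) * s := mul_le_mul_of_nonneg_left hns (by positivity)
      linarith
    have hn1 : (0:ℝ) < (n:ℝ) + 1 := by positivity
    have h3 : a (n+1) ≤ ((n:ℝ) * s + C) / ((n:ℝ)+1) := by
      rw [le_div_iff₀ hn1]; linarith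
    refine h3.trans ?_
    rw [div_le_iff₀ hn1]
    have : (s + C / ((n:ℝ)+1)) * ((n:ℝ)+1) = s*((n:ℝ)+1) + C := by field_simp
    rw [this]
    nlinarith
  -- first inequality : B ≤ A
  have hBA : B ≤ A := by
    rcases eq_top_or_lt_top A with hAtop | hAlt
    · simp [hAtop]
    · refine ENNReal.le_of_forall_pos_le_add fun ε hε _ => ?_
      have hε' : (0:ℝ) < (ε : ℝ) := by exact_mod_cast hε
      have hε2 : (0:ℝ) < (ε : ℝ) / 2 := by positivity
      have hAA : A < A + ENNReal.ofReal ((ε:ℝ)/2) := by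
        apply ENNReal.lt_add_right hAlt.ne
        simp [ENNReal.ofReal_pos, hε2]
      have hev : ∀ᶠ n in atTop, ENNReal.ofReal (a n) < A + ENNReal.ofReal ((ε:ℝ)/2) :=
        eventually_lt_of_limsup_lt hAA
      set s : ℝ := A.toReal + (ε:ℝ)/2 with hs_def
      have hs0 : 0 ≤ s := by positivity
      have hsval : A + ENNReal.ofReal ((ε:ℝ)/2) = ENNReal.ofReal s := by
        rw [hs_def, ENNReal.ofReal_add ENNReal.toReal_nonneg hε2.le,
          ENNReal.ofReal_toReal hAlt.ne]
      have hev2 : ∀ᶠ n in atTop, a n ≤ s := by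
        filter_upwards [hev] with n hn
        rw [hsval] at hn
        by_contra h
        exact absurd (ENNReal.ofReal_le_ofReal (le_of_not_ge h)) (not_le.2 hn)
      have hev3 : ∀ᶠ n : ℕ in atTop, s / (n:ℝ) ≤ (ε:ℝ)/2 :=
        (tendsto_const_div_atTop_nhds_zero_nat s).eventually_le_const hε2
      have hev4 : ∀ᶠ n in atTop, ENNReal.ofReal (b n) ≤ A + ε := by
        have h1 : ∀ᶠ n in atTop, a (n+1) ≤ s := by
          rw [eventually_atTop] at hev2 ⊢
          obtain ⟨N, hN⟩ := hev2
          exact ⟨N, fun n hn => hN (n+1) (by omega)⟩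
        filter_upwards [h1, hev3, eventually_ge_atTop 1] with n h1n h3n hn1
        have hb := hb_le n hn1 s hs0 h1n
        have : b n ≤ s + (ε:ℝ)/2 := by
          have : s / (n:ℝ) ≤ (ε:ℝ)/2 := h3n
          linarith
        calc ENNReal.ofReal (b n) ≤ ENNReal.ofReal (s + (ε:ℝ)/2) := ENNReal.ofReal_le_ofReal this
        _ = ENNReal.ofReal s + ENNReal.ofReal ((ε:ℝ)/2) := ENNReal.ofReal_add hs0 hε2.le
        _ ≤ A + ε := by
            rw [hs_def, ENNReal.ofReal_add ENNReal.toReal_nonneg hε2.le,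
              ENNReal.ofReal_toReal hAlt.ne, add_assoc]
            gcongr
            rw [← ENNReal.ofReal_add hε2.le hε2.le]
            simp only [add_halves]
            exact ENNReal.ofReal_coe_nnreal.le
      exact limsup_le_of_le (by isBoundedDefault) hev4
  -- second inequality : A ≤ B
  have hAB : A ≤ B := by
    rcases eq_top_or_lt_top B with hBtop | hBlt
    · simp [hBtop]
    · refine ENNReal.le_of_forall_pos_le_add fun ε hε _ => ?_
      have hε' : (0:ℝ) < (ε : ℝ) := by exact_mod_cast hε
      have hε2 : (0:ℝ) < (ε : ℝ) / 2 := by positivity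
      have hBB : B < B + ENNReal.ofReal ((ε:ℝ)/2) := by
        apply ENNReal.lt_add_right hBlt.ne
        simp [ENNReal.ofReal_pos, hε2]
      have hev : ∀ᶠ n in atTop, ENNReal.ofReal (b n) < B + ENNReal.ofReal ((ε:ℝ)/2) :=
        eventually_lt_of_limsup_lt hBB
      set s : ℝ := B.toReal + (ε:ℝ)/2 with hs_def
      have hs0 : 0 ≤ s := by positivity
      have hsval : B + ENNReal.ofReal ((ε:ℝ)/2) = ENNReal.ofReal s := by
        rw [hs_def, ENNReal.ofReal_add ENNReal.toReal_nonneg hε2.le,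
          ENNReal.ofReal_toReal hBlt.ne]
      have hev2 : ∀ᶠ n in atTop, b n ≤ s := by
        filter_upwards [hev] with n hn
        rw [hsval] at hn
        by_contra h
        exact absurd (ENNReal.ofReal_le_ofReal (le_of_not_ge h)) (not_le.2 hn)
      have hev3 : ∀ᶠ n : ℕ in atTop, C / ((n:ℝ)+1) ≤ (ε:ℝ)/2 := by
        have h1 : Tendsto (fun n : ℕ => C / ((n:ℝ)+1)) atTop (nhds 0) := by
          have heq : (fun n : ℕ => C / ((n:ℝ)+1)) = (fun n : ℕ => C / (n:ℝ)) ∘ (· + 1) := by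
            funext n; simp [Function.comp]
          rw [heq]
          exact (tendsto_const_div_atTop_nhds_zero_nat C).comp (tendsto_add_atTop_nat 1)
        exact h1.eventually_le_const hε2
      have hev4 : ∀ᶠ n in atTop, ENNReal.ofReal (a (n+1)) ≤ B + ε := by
        filter_upwards [hev2, hev3, eventually_ge_atTop 1] with n h2n h3n hn1
        have hba := ha_le n hn1 s hs0 h2n
        have : a (n+1) ≤ s + (ε:ℝ)/2 := by linarith
        calc ENNReal.ofReal (a (n+1)) ≤ ENNReal.ofReal (s + (ε:ℝ)/2) :=
              ENNReal.ofReal_le_ofReal this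
        _ = ENNReal.ofReal s + ENNReal.ofReal ((ε:ℝ)/2) := ENNReal.ofReal_add hs0 hε2.le
        _ ≤ B + ε := by
            rw [hs_def, ENNReal.ofReal_add ENNReal.toReal_nonneg hε2.le,
              ENNReal.ofReal_toReal hBlt.ne, add_assoc]
            gcongr
            rw [← ENNReal.ofReal_add hε2.le hε2.le]
            simp only [add_halves]
            exact ENNReal.ofReal_coe_nnreal.le
      have : limsup (fun n => ENNReal.ofReal (a (n+1))) atTop ≤ B + ε :=
        limsup_le_of_le (by isBoundedDefault) hev4
      rwa [limsup_nat_add (fun n => ENNReal.ofReal (a n)) 1] at this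
  exact le_antisymm hBA hAB

end

section ErgodicLimsup

variable {Ω : Type*} [MeasurableSpace Ω] {μ : MeasureTheory.Measure Ω} {T : Ω → Ω}

/-- Half of Birkhoff's ergodic theorem: for an ergodic map and a nonnegative integrable
function, almost surely the `limsup` of the Birkhoff averages is at most the mean. -/
theorem ergodic_limsup_avg_le [IsProbabilityMeasure μ] (hT : Ergodic T μ)
    {f : Ω → ℝ} (hfm : Measurable f) (hf0 : ∀ x, 0 ≤ f x) (hfi : Integrable f μ) :
    ∀ᵐ ω ∂μ, limsup (fun n : ℕ => ENNReal.ofReal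
        ((n : ℝ)⁻¹ * ∑ k ∈ Finset.range n, f (T^[k] ω))) atTop
      ≤ ENNReal.ofReal (∫ x, f x ∂μ) := by
  set S : ℕ → Ω → ℝ := fun n ω => ∑ k ∈ Finset.range n, f (T^[k] ω) with hS
  have hSm : ∀ n, Measurable (S n) := fun n =>
    Finset.measurable_sum _ fun k _ => hfm.comp (hT.toMeasurePreserving.measurable.iterate k)
  have hS0 : ∀ n ω, 0 ≤ S n ω := fun n ω => Finset.sum_nonneg fun k _ => hf0 _
  set Av : ℕ → Ω → ℝ := fun n ω => (n : ℝ)⁻¹ * S n ω with hAv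
  have hAv0 : ∀ n ω, 0 ≤ Av n ω := fun n ω => mul_nonneg (by positivity) (hS0 n ω)
  set L : Ω → ℝ≥0∞ := fun ω => limsup (fun n => ENNReal.ofReal (Av n ω)) atTop with hL
  have hLm : Measurable L :=
    Measurable.limsup fun n => ENNReal.measurable_ofReal.comp ((hSm n).const_mul _)
  -- invariance of L
  have hLinv : ∀ ω, L (T ω) = L ω := by
    intro ω
    refine limsup_ofReal_rel (C := f ω) (fun n => hAv0 n ω) (hf0 ω) ?_
    intro n hn
    have hn0 : ((n:ℝ)) ≠ 0 := by positivity
    have hn10 : ((n:ℝ) + 1) ≠ 0 := by positivity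
    have hSrel : S n (T ω) = S (n+1) ω - f ω := by
      rw [hS]
      simp only
      rw [Finset.sum_range_succ' (fun k => f (T^[k] ω)) n]
      simp only [Function.iterate_succ_apply, Function.iterate_zero_apply]
      ring
    have e1 : (n:ℝ) * Av n (T ω) = S n (T ω) := by
      rw [hAv]; simp only; field_simp
    have e2 : ((n:ℝ)+1) * Av (n+1) ω = S (n+1) ω := by
      rw [hAv]; simp only; push_cast; field_simp
    rw [e1, e2, hSrel]
  -- L is a.e. constant
  obtain ⟨c, hc⟩ := hT.ae_eq_const_of_ae_eq_comp₀ hLm.nullMeasurable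
    (Filter.Eventually.of_forall (fun ω => hLinv ω) : L ∘ T =ᵐ[μ] L)
  set I : ℝ := ∫ x, f x ∂μ with hI
  have hI0 : 0 ≤ I := integral_nonneg hf0
  -- suffices : c ≤ ofReal I
  have key : c ≤ ENNReal.ofReal I := by
    by_contra hlt
    push_neg at hlt
    obtain ⟨d, hd1, hd2⟩ := exists_between hlt
    have hdt : d ≠ ⊤ := hd2.ne_top
    set c' : ℝ := d.toReal with hc'
    have hIc' : I < c' := (ENNReal.ofReal_lt_iff_lt_toReal hI0 hdt).1 hd1
    have hc'0 : 0 < c' := lt_of_le_of_lt hI0 hIc'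
    have hdofReal : d = ENNReal.ofReal c' := (ENNReal.ofReal_toReal hdt).symm
    -- the sets E N
    set E : ℕ → Set Ω := fun N => {ω | ∀ m, 1 ≤ m → m ≤ N → S m ω < c' * m} with hE
    have hEmeas : ∀ N, MeasurableSet (E N) := by
      intro N
      have : E N = ⋂ (m : ℕ), ⋂ (_ : 1 ≤ m), ⋂ (_ : m ≤ N), {ω | S m ω < c' * m} := by
        ext ω; simp [hE, Set.mem_iInter]
      rw [this]
      exact MeasurableSet.iInter fun m => MeasurableSet.iInter fun _ =>
        MeasurableSet.iInter fun _ => measurableSet_lt (hSm m) measurable_const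
    have hEanti : Antitone E := by
      intro N M hNM ω hω
      exact fun m h1 h2 => hω m h1 (h2.trans hNM)
    -- the intersection is null
    have hInull : μ (⋂ N, E N) = 0 := by
      have hsub : (⋂ N, E N) ⊆ {ω | ¬ (L ω = c)} := by
        intro ω hω
        simp only [Set.mem_iInter] at hω
        intro hLc
        have hbound : ∀ᶠ n in atTop, ENNReal.ofReal (Av n ω) ≤ d := by
          filter_upwards [eventually_ge_atTop 1] with n hn
          have hlt := hω n n hn le_rfl
          have : Av n ω ≤ c' := by
            rw [hAv]
            simp only
            rw [inv_mul_le_iff₀ (by positivity : (0:ℝ) < (n:ℝ))]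
            nlinarith [hlt]
          rw [hdofReal]
          exact ENNReal.ofReal_le_ofReal this
        have : L ω ≤ d := limsup_le_of_le (by isBoundedDefault) hbound
        rw [hLc] at this
        exact absurd this (not_le.2 hd2)
      refine measure_mono_null hsub ?_
      have := hc
      rw [Filter.EventuallyEq, ae_iff] at this
      simpa using this
    -- choose N with μ (E N) small
    set δ : ℝ := (c' - I) / (2 * c') with hδ
    have hδ0 : 0 < δ := by
      apply div_pos (by linarith) (by linarith)
    have htend : Tendsto (fun N => μ (E N)) atTop (nhds 0) := by
      have := tendsto_measure_iInter_atTop (μ := μ) (s := E)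
        (fun n => (hEmeas n).nullMeasurableSet) hEanti ⟨0, measure_ne_top _ _⟩
      rwa [hInull] at this
    have hev : ∀ᶠ N in atTop, μ (E N) < ENNReal.ofReal δ :=
      htend.eventually_lt_const (by simp [ENNReal.ofReal_pos, hδ0])
    obtain ⟨N, hN⟩ := hev.exists
    -- the auxiliary function g
    set g : Ω → ℝ := fun ω => f ω + c' * (E N).indicator (fun _ => (1:ℝ)) ω with hg
    have hg0 : ∀ ω, 0 ≤ g ω := by
      intro ω
      have : 0 ≤ (E N).indicator (fun _ => (1:ℝ)) ω := Set.indicator_nonneg (fun _ _ => zero_le_one) ω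
      have := mul_nonneg hc'0.le this
      simp only [hg]
      linarith [hf0 ω]
    have hgf : ∀ ω, f ω ≤ g ω := by
      intro ω
      have : 0 ≤ (E N).indicator (fun _ => (1:ℝ)) ω := Set.indicator_nonneg (fun _ _ => zero_le_one) ω
      simp only [hg]
      nlinarith
    have hgm : Measurable g := by
      apply hfm.add
      exact (measurable_const.indicator (hEmeas N)).const_mul c'
    have hgi : Integrable g μ := by
      apply hfi.add
      exact (((integrable_const (1:ℝ)).indicator (hEmeas N)).const_mul c')
    -- the covering claim
    have claim : ∀ n : ℕ, ∀ ω, c' * ((n : ℝ) - N) ≤ ∑ k ∈ Finset.range n, g (T^[k] ω) := by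
      intro n
      induction n using Nat.strong_induction_on with
      | _ n ih =>
        match n with
        | 0 =>
          intro ω
          simp only [Finset.range_zero, Finset.sum_empty, Nat.cast_zero]
          apply mul_nonpos_of_nonneg_of_nonpos hc'0.le
          simp
        | (m+1) =>
          intro ω
          by_cases hω : ω ∈ E N
          · -- first step in E
            have hsplit : ∑ k ∈ Finset.range (m+1), g (T^[k] ω)
                = (∑ k ∈ Finset.range m, g (T^[k] (T ω))) + g ω := by
              rw [Finset.sum_range_succ' (fun k => g (T^[k] ω)) m]
              simp only [Function.iterate_succ_apply, Function.iterate_zero_apply]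
            have hgω : c' ≤ g ω := by
              simp only [hg, Set.indicator_of_mem hω, mul_one]
              linarith [hf0 ω]
            have hih := ih m (Nat.lt_succ_self m) (T ω)
            rw [hsplit]
            push_cast
            linarith
          · -- use the stopping time
            simp only [hE, Set.mem_setOf_eq, not_forall] at hω
            obtain ⟨m₀, h1m₀, hm₀N, hm₀⟩ := hω
            push_neg at hm₀
            by_cases hcase : m₀ ≤ m + 1
            · -- split at m₀
              obtain ⟨p, hp⟩ : ∃ p, m + 1 = m₀ + p := ⟨m + 1 - m₀, by omega⟩
              have hsplit : ∑ k ∈ Finset.range (m+1), g (T^[k] ω)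
                  = (∑ k ∈ Finset.range m₀, g (T^[k] ω))
                    + ∑ k ∈ Finset.range p, g (T^[m₀ + k] ω) := by
                rw [hp, Finset.sum_range_add]
              have h1 : S m₀ ω ≤ ∑ k ∈ Finset.range m₀, g (T^[k] ω) :=
                Finset.sum_le_sum fun k _ => hgf _
              have h2 : ∀ k, g (T^[m₀ + k] ω) = g (T^[k] (T^[m₀] ω)) := by
                intro k
                rw [add_comm, Function.iterate_add_apply]
              have hih := ih p (by omega) (T^[m₀] ω)
              have h3 : c' * ((p : ℝ) - N) ≤ ∑ k ∈ Finset.range p, g (T^[m₀ + k] ω) := by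
                rw [Finset.sum_congr rfl fun k _ => h2 k]
                exact hih
              rw [hsplit]
              have hcast : ((m+1 : ℕ) : ℝ) = (m₀ : ℝ) + (p : ℝ) := by
                rw [hp]; push_cast; ring
              rw [hcast]
              nlinarith [hm₀]
            · -- n ≤ m₀ ≤ N : trivial since the sum is nonneg
              have hnN : (m + 1 : ℕ) ≤ N := by omega
              have : c' * (((m+1 : ℕ) : ℝ) - N) ≤ 0 := by
                apply mul_nonpos_of_nonneg_of_nonpos hc'0.le
                have : ((m+1 : ℕ) : ℝ) ≤ (N : ℝ) := by exact_mod_cast hnN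
                linarith
              refine this.trans ?_
              exact Finset.sum_nonneg fun k _ => hg0 _
    -- integrate the claim
    have hint_comp : ∀ k : ℕ, ∫ ω, g (T^[k] ω) ∂μ = ∫ ω, g ω ∂μ := by
      intro k
      have hmp : MeasurePreserving (T^[k]) μ μ := hT.toMeasurePreserving.iterate k
      calc ∫ ω, g (T^[k] ω) ∂μ = ∫ ω, g ω ∂(μ.map (T^[k])) :=
            (integral_map hmp.measurable.aemeasurable hgm.aestronglyMeasurable).symm
      _ = ∫ ω, g ω ∂μ := by rw [hmp.map_eq]
    have hint_compi : ∀ k : ℕ, Integrable (fun ω => g (T^[k] ω)) μ := by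
      intro k
      have hmp : MeasurePreserving (T^[k]) μ μ := hT.toMeasurePreserving.iterate k
      exact (hmp.map_eq.symm ▸ hgi : Integrable g (μ.map (T^[k]))).comp_measurable hmp.measurable
    have hIg : ∫ ω, g ω ∂μ = I + c' * (μ (E N)).toReal := by
      rw [hg, integral_add hfi (((integrable_const (1:ℝ)).indicator (hEmeas N)).const_mul c')]
      congr 1
      have hsmul : (fun ω => c' * (E N).indicator (fun _ => (1:ℝ)) ω)
          = fun ω => c' • ((E N).indicator (1 : Ω → ℝ) ω) := rfl
      rw [hsmul, integral_smul, integral_indicator_one (hEmeas N), smul_eq_mul]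
      rfl
    have hIg_le : ∫ ω, g ω ∂μ ≤ I + c' * δ := by
      rw [hIg]
      have h1 : (μ (E N)).toReal ≤ δ := by
        have := (ENNReal.toReal_le_toReal (measure_ne_top _ _) ENNReal.ofReal_ne_top).2 hN.le
        rwa [ENNReal.toReal_ofReal hδ0.le] at this
      nlinarith
    have hmain : ∀ n : ℕ, c' * ((n : ℝ) - N) ≤ (n : ℝ) * (I + c' * δ) := by
      intro n
      have h1 : c' * ((n : ℝ) - N) ≤ ∫ ω, ∑ k ∈ Finset.range n, g (T^[k] ω) ∂μ := by
        have hconst : c' * ((n : ℝ) - N) = ∫ _ω, c' * ((n : ℝ) - N) ∂μ := by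
          rw [integral_const]; simp
        rw [hconst]
        apply integral_mono (integrable_const _) (integrable_finset_sum _ fun k _ => hint_compi k)
        exact fun ω => claim n ω
      have h2 : ∫ ω, ∑ k ∈ Finset.range n, g (T^[k] ω) ∂μ = (n : ℝ) * ∫ ω, g ω ∂μ := by
        rw [integral_finset_sum _ fun k _ => hint_compi k]
        rw [Finset.sum_congr rfl fun k _ => hint_comp k]
        simp [Finset.sum_const, nsmul_eq_mul]
      rw [h2] at h1
      refine h1.trans ?_
      apply mul_le_mul_of_nonneg_left hIg_le (by positivity)
    -- take the limit
    have hfinal : c' ≤ I + c' * δ := by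
      have hseq : ∀ᶠ n : ℕ in atTop, c' - c' * N / n ≤ I + c' * δ := by
        filter_upwards [eventually_ge_atTop 1] with n hn
        have hn0 : (0:ℝ) < n := by positivity
        have := hmain n
        rw [mul_sub] at this
        have h2 : c' - c' * N / n = (c' * (n:ℝ) - c' * N)/n := by
          field_simp
        have h3 : ((n:ℝ) * (I + c' * δ))/n = I + c' * δ := by
          field_simp
        rw [h2, ← h3]
        exact (div_le_div_iff_of_pos_right hn0).2 this
      have htt : Tendsto (fun n : ℕ => c' - c' * N / n) atTop (nhds (c' - 0)) :=
        tendsto_const_nhds.sub (tendsto_const_div_atTop_nhds_zero_nat (c' * N))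
      have hle := le_of_tendsto htt hseq
      linarith
    have : c' * δ < c' - I := by
      rw [hδ]
      rw [mul_div_assoc']
      rw [div_lt_iff₀ (by linarith : (0:ℝ) < 2 * c')]
      nlinarith
    linarith
  filter_upwards [hc] with ω hω
  calc limsup (fun n => ENNReal.ofReal (Av n ω)) atTop = c := hω
  _ ≤ ENNReal.ofReal I := key

end ErgodicLimsup



/-- Gibbs' inequality: the integral of the log-likelihood ratio is nonnegative. -/
lemma integral_llr_nonneg' {X : Type*} [MeasurableSpace X] {μ ν : Measure X}
    [IsProbabilityMeasure μ] [IsProbabilityMeasure ν] (hμν : μ ≪ ν)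
    (hi : Integrable (llr μ ν) μ) : 0 ≤ ∫ x, llr μ ν x ∂μ := by
  set d : X → ℝ≥0∞ := μ.rnDeriv ν with hd
  have hdm : Measurable d := Measure.measurable_rnDeriv μ ν
  have hpos : ∀ᵐ x ∂μ, 0 < d x := Measure.rnDeriv_pos hμν
  have hfin : ∀ᵐ x ∂μ, d x < ⊤ := hμν.ae_le (Measure.rnDeriv_lt_top μ ν)
  set φ : X → ℝ := fun x => - llr μ ν x with hφ
  have hφi : Integrable φ μ := hi.neg
  have hint1 : Integrable (fun x => φ x + 1) μ := hφi.add (integrable_const 1)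
  have step2 : ∫⁻ x, ENNReal.ofReal (φ x + 1) ∂μ ≤ ∫⁻ x, (d x)⁻¹ ∂μ := by
    apply lintegral_mono_ae
    filter_upwards [hpos, hfin] with x hx1 hx2
    have hxr : 0 < (d x).toReal := ENNReal.toReal_pos hx1.ne' hx2.ne
    have hexp : φ x + 1 ≤ Real.exp (φ x) := by
      have := Real.add_one_le_exp (φ x)
      linarith
    have hexpeq : Real.exp (φ x) = ((d x).toReal)⁻¹ := by
      rw [hφ]
      simp only [llr_def]
      rw [Real.exp_neg, Real.exp_log hxr]
    calc ENNReal.ofReal (φ x + 1) ≤ ENNReal.ofReal (((d x).toReal)⁻¹) := by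
          rw [← hexpeq]; exact ENNReal.ofReal_le_ofReal hexp
    _ = (d x)⁻¹ := by
        rw [← ENNReal.toReal_inv]
        exact ENNReal.ofReal_toReal (by simp [hx1.ne'])
  have step3 : ∫⁻ x, (d x)⁻¹ ∂μ ≤ 1 := by
    conv_lhs => rw [← Measure.withDensity_rnDeriv_eq μ ν hμν]
    rw [lintegral_withDensity_eq_lintegral_mul ν (f := μ.rnDeriv ν) hdm (g := fun x => (d x)⁻¹) hdm.inv]
    calc ∫⁻ x, (d * fun x => (d x)⁻¹) x ∂ν ≤ ∫⁻ _, 1 ∂ν := by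
          apply lintegral_mono
          intro x
          simp only [Pi.mul_apply]
          rcases eq_or_ne (d x) 0 with h | h
          · simp [h]
          · rcases eq_or_ne (d x) ⊤ with h' | h'
            · simp [h']
            · rw [ENNReal.mul_inv_cancel h h']
    _ = 1 := by simp
  have hlin : ∫⁻ x, ENNReal.ofReal (φ x + 1) ∂μ ≤ 1 := step2.trans step3
  set F : X → ℝ := fun x => max (φ x + 1) 0 with hF
  have hFi : Integrable F μ := hint1.pos_part
  have hFeq : ENNReal.ofReal (∫ x, F x ∂μ) = ∫⁻ x, ENNReal.ofReal (φ x + 1) ∂μ := by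
    rw [ofReal_integral_eq_lintegral_ofReal hFi
      (Filter.Eventually.of_forall fun x => le_max_right _ _)]
    apply lintegral_congr fun x => ?_
    rcases le_total (φ x + 1) 0 with h | h
    · simp [hF, max_eq_right h, ENNReal.ofReal_of_nonpos h]
    · simp [hF, max_eq_left h]
  have hFle : ∫ x, F x ∂μ ≤ 1 := by
    have h1 : ENNReal.ofReal (∫ x, F x ∂μ) ≤ 1 := by rw [hFeq]; exact hlin
    rwa [ENNReal.ofReal_le_one] at h1
  have this : ∫ x, (φ x + 1) ∂μ ≤ 1 := by
    refine le_trans (integral_mono hint1 hFi fun x => le_max_left _ _) hFle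
  rw [integral_add hφi (integrable_const 1)] at this
  simp only [integral_const, measure_univ, probReal_univ, ENNReal.toReal_one, smul_eq_mul, one_mul] at this
  have : ∫ x, φ x ∂μ ≤ 0 := by linarith
  rw [hφ, integral_neg] at this
  linarith


section MeasureHelpers

variable {A B : Type*} [MeasurableSpace A] [MeasurableSpace B]

lemma measure_map_finset_sum {ι : Type*} (s : Finset ι) (μ : ι → MeasureTheory.Measure A)
    {f : A → B} (hf : Measurable f) :
    (∑ i ∈ s, μ i).map f = ∑ i ∈ s, (μ i).map f := by
  induction s using Finset.cons_induction with
  | empty => simp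
  | cons a s ha ih =>
    rw [Finset.sum_cons, Finset.sum_cons, Measure.map_add _ _ hf, ih]

lemma withDensity_finset_sum {ι : Type*} (s : Finset ι) (μ : ι → MeasureTheory.Measure A)
    (f : A → ℝ≥0∞) :
    (∑ i ∈ s, μ i).withDensity f = ∑ i ∈ s, (μ i).withDensity f := by
  induction s using Finset.cons_induction with
  | empty =>
    ext t ht
    simp [withDensity_apply _ ht]
  | cons a s ha ih =>
    rw [Finset.sum_cons, Finset.sum_cons, withDensity_add_measure, ih]

lemma withDensity_map_embed {e : A → B} (he : MeasurableEmbedding e) {g : B → ℝ≥0∞}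
    (hg : Measurable g) (ν : MeasureTheory.Measure A) :
    (ν.map e).withDensity g = (ν.withDensity (fun x => g (e x))).map e := by
  ext s hs
  rw [withDensity_apply _ hs, Measure.restrict_map he.measurable hs, he.lintegral_map,
    Measure.map_apply he.measurable hs, withDensity_apply _ (he.measurable hs)]

/-- If `K x = Q.withDensity (h (x, ·))` for `R`-a.e. `x`, then
`R ⊗ₘ K = (R.prod Q).withDensity h`. -/
lemma compProd_eq_withDensity {R : MeasureTheory.Measure A} [IsFiniteMeasure R]
    {Q : MeasureTheory.Measure B} [IsFiniteMeasure Q]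
    {K : ProbabilityTheory.Kernel A B} [ProbabilityTheory.IsFiniteKernel K]
    {h : A × B → ℝ≥0∞} (hm : Measurable h)
    (hae : ∀ᵐ x ∂ R, K x = Q.withDensity (fun y => h (x, y))) :
    R.compProd K = (R.prod Q).withDensity h := by
  have hsect : ∀ᵐ x ∂ R, ∀ t : Set B, MeasurableSet t → K x t = ∫⁻ y in t, h (x, y) ∂Q := by
    filter_upwards [hae] with x hx
    intro t ht
    rw [hx, withDensity_apply _ ht]
  have key : ∀ s : Set A, ∀ t : Set B, MeasurableSet s → MeasurableSet t →
      (R.compProd K) (s ×ˢ t) = ((R.prod Q).withDensity h) (s ×ˢ t) := by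
    intro s t hs ht
    rw [Measure.compProd_apply_prod hs ht]
    rw [withDensity_apply _ (hs.prod ht), ← Measure.prod_restrict s t,
      lintegral_prod _ hm.aemeasurable]
    refine (setLIntegral_congr_fun_ae hs ?_).symm
    filter_upwards [hsect] with x hx _
    rw [hx t ht]
  refine MeasureTheory.ext_of_generate_finite _ generateFrom_prod.symm isPiSystem_prod ?_ ?_
  · rintro u ⟨s, hs, t, ht, rfl⟩
    exact key s t hs ht
  · have := key univ univ MeasurableSet.univ MeasurableSet.univ
    simpa [Set.univ_prod_univ] using this

lemma llr_withDensity_ae {ν : MeasureTheory.Measure (A × B)} [SigmaFinite ν]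
    {h : A × B → ℝ≥0∞} (hm : Measurable h) :
    llr (ν.withDensity h) ν =ᵐ[ν.withDensity h] fun p => Real.log (h p).toReal := by
  have h1 : (ν.withDensity h).rnDeriv ν =ᵐ[ν] h := Measure.rnDeriv_withDensity ν hm
  have h2 : (ν.withDensity h).rnDeriv ν =ᵐ[ν.withDensity h] h :=
    h1.filter_mono (withDensity_absolutelyContinuous ν h).ae_le
  filter_upwards [h2] with p hp
  show Real.log ((ν.withDensity h).rnDeriv ν p).toReal = Real.log (h p).toReal
  rw [hp]

/-- If `R ⊗ₘ K ≪ R.prod Q` then for `R`-a.e. `x` the kernel is given by the density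
`Kernel.rnDeriv K (Kernel.const A Q)`. -/
lemma ae_kernel_eq_withDensity [MeasurableSpace.CountablyGenerated B]
    {R : MeasureTheory.Measure A} [IsFiniteMeasure R]
    {Q : MeasureTheory.Measure B} [IsFiniteMeasure Q]
    {K : ProbabilityTheory.Kernel A B} [ProbabilityTheory.IsFiniteKernel K]
    (hac : R.compProd K ≪ R.prod Q) :
    ∀ᵐ x ∂ R, K x = Q.withDensity
      (fun y => ProbabilityTheory.Kernel.rnDeriv K (ProbabilityTheory.Kernel.const A Q) x y) := by
  classical
  set η : ProbabilityTheory.Kernel A B := ProbabilityTheory.Kernel.const A Q with hη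
  set S : Set (A × B) := ProbabilityTheory.Kernel.mutuallySingularSet K η with hSdef
  have hSm : MeasurableSet S := ProbabilityTheory.Kernel.measurableSet_mutuallySingularSet K η
  have hslice : ∀ x : A, Prod.mk x ⁻¹' S
      = ProbabilityTheory.Kernel.mutuallySingularSetSlice K η x := by
    intro x
    ext y
    simp only [Set.mem_preimage, hSdef]
    rw [ProbabilityTheory.Kernel.mem_mutuallySingularSetSlice]
    rfl
  have hprodS : (R.prod Q) S = 0 := by
    rw [Measure.prod_apply hSm]
    have : ∀ x : A, Q (Prod.mk x ⁻¹' S) = 0 := by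
      intro x
      rw [hslice x]
      have := ProbabilityTheory.Kernel.measure_mutuallySingularSetSlice K η x
      simpa [hη] using this
    simp [this]
  have hWS : (R.compProd K) S = 0 := hac hprodS
  rw [Measure.compProd_apply hSm] at hWS
  have hmeas : Measurable fun x => K x (Prod.mk x ⁻¹' S) :=
    ProbabilityTheory.Kernel.measurable_kernel_prodMk_left hSm
  rw [lintegral_eq_zero_iff hmeas] at hWS
  filter_upwards [hWS] with x hx
  simp only [Pi.zero_apply] at hx
  rw [hslice x] at hx
  -- the singular part vanishes at x
  have hdec := ProbabilityTheory.Kernel.rnDeriv_add_singularPart K η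
  have hdecx : K x = (ProbabilityTheory.Kernel.withDensity η (ProbabilityTheory.Kernel.rnDeriv K η)) x
      + (ProbabilityTheory.Kernel.singularPart K η) x := by
    conv_lhs => rw [← hdec]
    rfl
  have hsp1 : (ProbabilityTheory.Kernel.singularPart K η) x
      (ProbabilityTheory.Kernel.mutuallySingularSetSlice K η x) = 0 := by
    have hle : (ProbabilityTheory.Kernel.singularPart K η) x
        (ProbabilityTheory.Kernel.mutuallySingularSetSlice K η x)
        ≤ K x (ProbabilityTheory.Kernel.mutuallySingularSetSlice K η x) := by
      conv_rhs => rw [hdecx]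
      simp [Measure.add_apply]
    simpa [hx] using hle
  have hsp2 : (ProbabilityTheory.Kernel.singularPart K η) x
      (ProbabilityTheory.Kernel.mutuallySingularSetSlice K η x)ᶜ = 0 :=
    ProbabilityTheory.Kernel.singularPart_compl_mutuallySingularSetSlice K η x
  have hsp0 : (ProbabilityTheory.Kernel.singularPart K η) x = 0 := by
    have huniv : (ProbabilityTheory.Kernel.singularPart K η) x Set.univ = 0 := by
      rw [← Set.union_compl_self (ProbabilityTheory.Kernel.mutuallySingularSetSlice K η x)]
      refine le_antisymm ?_ (zero_le)
      refine (measure_union_le _ _).trans ?_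
      rw [hsp1, hsp2, add_zero]
    exact Measure.measure_univ_eq_zero.mp huniv
  rw [hdecx, hsp0, add_zero,
    ProbabilityTheory.Kernel.withDensity_apply _ (ProbabilityTheory.Kernel.measurable_rnDeriv K η)]
  simp [hη]

end MeasureHelpers

section ShiftHelpers

lemma shift_iterate_apply {A : Type*} (k : ℕ) (ω : ℕ → A) (n : ℕ) :
    (shift^[k] ω) n = ω (n + k) := by
  induction k generalizing ω with
  | zero => simp
  | succ m ih =>
    rw [Function.iterate_succ_apply, ih (shift ω)]
    rfl

lemma empMeas_univ {A : Type*} [MeasurableSpace A] (x : ℕ → A) {n : ℕ} (hn : 1 ≤ n) :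
    (empMeas x n) Set.univ = 1 := by
  rw [empMeas]
  simp only [Measure.smul_apply, Measure.coe_finset_sum, Finset.sum_apply, smul_eq_mul]
  simp only [Measure.dirac_apply_of_mem (Set.mem_univ _)]
  rw [Finset.sum_const, Finset.card_range, nsmul_eq_mul, mul_one]
  rw [ENNReal.inv_mul_cancel]
  · exact_mod_cast Nat.pos_of_ne_zero (by omega) |>.ne'
  · exact ENNReal.natCast_ne_top n

lemma lintegral_empMeas {A : Type*} [MeasurableSpace A] (x : ℕ → A) (n : ℕ)
    {f : A → ℝ≥0∞} (hf : Measurable f) :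
    ∫⁻ a, f a ∂(empMeas x n) = (n : ℝ≥0∞)⁻¹ * ∑ k ∈ Finset.range n, f (x k) := by
  rw [empMeas, lintegral_smul_measure, lintegral_finset_sum_measure]
  congr 1
  exact Finset.sum_congr rfl fun k _ => lintegral_dirac' _ hf

lemma integrable_empMeas {A : Type*} [MeasurableSpace A] (x : ℕ → A) (n : ℕ)
    {f : A → ℝ} (hf : StronglyMeasurable f) :
    Integrable f (empMeas x n) := by
  rcases Nat.eq_zero_or_pos n with rfl | hn
  · simp only [empMeas, Finset.range_zero, Finset.sum_empty, smul_zero]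
    exact integrable_zero_measure
  rw [empMeas]
  refine Integrable.smul_measure ?_ (by simp [hn.ne'])
  refine integrable_finset_sum_measure.2 fun k _ => ?_
  refine ⟨hf.aestronglyMeasurable, ?_⟩
  rw [HasFiniteIntegral, lintegral_dirac' _ hf.measurable.enorm]
  exact enorm_lt_top

lemma integral_empMeas {A : Type*} [MeasurableSpace A] (x : ℕ → A) (n : ℕ)
    {f : A → ℝ} (hf : StronglyMeasurable f) :
    ∫ a, f a ∂(empMeas x n) = (n:ℝ)⁻¹ * ∑ k ∈ Finset.range n, f (x k) := by
  rw [empMeas, integral_smul_measure,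
    integral_finset_sum_measure (fun k _ => ⟨hf.aestronglyMeasurable, by
      rw [HasFiniteIntegral, lintegral_dirac' _ hf.measurable.enorm]
      exact enorm_lt_top⟩)]
  rw [Finset.sum_congr rfl fun k _ => integral_dirac' f (x k) hf]
  simp [ENNReal.toReal_inv, smul_eq_mul]

end ShiftHelpers

/-- For a stationary ergodic source with marginal `P` and an arbitrary
family `{Q_θ}` of probability measures on the reproduction alphabet, for every
`D ∈ D_c^Θ(P)`, with probability 1,
`limsup_n R₁^Θ(P_{X₁ⁿ}, D) ≤ R₁^Θ(P, D)`. -/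
theorem plugin_upper_bound
    {A B Θ : Type*} [MeasurableSpace A] [MeasurableSpace B]
    [StandardBorelSpace A] [StandardBorelSpace B]
    (ρ : A → B → ℝ) (hρmeas : Measurable (Function.uncurry ρ))
    (hρnn : ∀ x y, 0 ≤ ρ x y)
    (Q : Θ → Measure B) (hQ : ∀ θ, IsProbabilityMeasure (Q θ))
    (μ : Measure (ℕ → A)) [IsProbabilityMeasure μ]
    (herg : Ergodic shift μ)
    (P : Measure A) (hP : P = μ.map (fun ω => ω 0))
    (D : ℝ) (hD : D ∈ DcTh ρ Q P) :
    ∀ᵐ ω ∂μ, limsup (fun n => RTh ρ Q (empMeas ω n) D) atTop ≤ RTh ρ Q P D := by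
  classical
  by_cases hRtop : RTh ρ Q P D = ⊤
  · filter_upwards with ω
    rw [hRtop]
    exact le_top
  have hΘne : Nonempty Θ := by
    by_contra h
    rw [not_nonempty_iff] at h
    exact hRtop (by simp only [RTh]; exact iInf_of_empty _)
  obtain ⟨θ₀⟩ := hΘne
  have hBne : Nonempty B := by
    by_contra h
    rw [not_nonempty_iff] at h
    have h1 : (Q θ₀) Set.univ = 1 := (hQ θ₀).measure_univ
    rw [Set.univ_eq_empty_iff.2 h, measure_empty] at h1
    exact zero_ne_one h1
  haveI hPprob : IsProbabilityMeasure P := by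
    rw [hP]; exact Measure.isProbabilityMeasure_map (measurable_pi_apply 0).aemeasurable
  have hshift_meas : Measurable (shift (A := A)) := herg.toMeasurePreserving.measurable
  have hmap_eval : ∀ k : ℕ, μ.map (fun ω => ω k) = P := by
    intro k
    have h1 : (fun ω : ℕ → A => ω k) = (fun ω : ℕ → A => ω 0) ∘ (shift^[k]) := by
      funext ω
      simp [Function.comp, shift_iterate_apply]
    rw [h1, ← Measure.map_map (measurable_pi_apply 0) (hshift_meas.iterate k),
      (herg.toMeasurePreserving.iterate k).map_eq, hP]
  have hae_coords : ∀ (G : Set A), MeasurableSet G → P Gᶜ = 0 → ∀ᵐ ω ∂μ, ∀ k, ω k ∈ G := by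
    intro G hG hGc
    rw [ae_all_iff]
    intro k
    have h0 : μ ((fun ω : ℕ → A => ω k) ⁻¹' Gᶜ) = 0 := by
      rw [← Measure.map_apply (measurable_pi_apply k) hG.compl, hmap_eval k, hGc]
    rw [ae_iff]
    exact h0
  -- main quantitative step
  have main : ∀ r : ℝ≥0∞, RTh ρ Q P D < r → r ≠ ⊤ →
      ∀ᵐ ω ∂μ, limsup (fun n => RTh ρ Q (empMeas ω n) D) atTop ≤ r := by
    intro r hr hrt
    have extract : ∀ D'' : ℝ, RTh ρ Q P D'' < r →
        ∃ θ W, W ∈ Wset ρ P D'' ∧ relEnt W (P.prod (Q θ)) < r := by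
      intro D'' h
      simp only [RTh] at h
      obtain ⟨θ, hθ⟩ := iInf_lt_iff.mp h
      simp only [RQ] at hθ
      obtain ⟨W, hW⟩ := iInf_lt_iff.mp hθ
      obtain ⟨hWmem, hWlt⟩ := iInf_lt_iff.mp hW
      exact ⟨θ, W, hWmem, hWlt⟩
    obtain ⟨D', hD'0, hD'leD, hgap, θ, W, hWmem, hWrel⟩ :
        ∃ D' : ℝ, 0 ≤ D' ∧ D' ≤ D ∧ (D = 0 ∨ D' < D) ∧
          ∃ θ W, W ∈ Wset ρ P D' ∧ relEnt W (P.prod (Q θ)) < r := by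
      by_cases hDzero : D = 0
      · exact ⟨D, hD.1, le_refl _, Or.inl hDzero, extract D hr⟩
      · have hDpos : 0 < D := lt_of_le_of_ne hD.1 (Ne.symm hDzero)
        rcases hD.2 with h0 | hRT | heq
        · exact absurd h0 hDzero
        · exact absurd hRT hRtop
        · rw [heq] at hr
          obtain ⟨l, hl⟩ := iInf_lt_iff.mp hr
          obtain ⟨hlIoo, hlt⟩ := iInf_lt_iff.mp hl
          refine ⟨l * D, by nlinarith [hlIoo.1], by nlinarith [hlIoo.2],
            Or.inr (by nlinarith [hlIoo.1, hlIoo.2]), extract _ hlt⟩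
    obtain ⟨hWprob, hWfst, hWdist⟩ := hWmem
    haveI := hWprob
    haveI : IsProbabilityMeasure (Q θ) := hQ θ
    have hrelne : relEnt W (P.prod (Q θ)) ≠ ⊤ :=
      (hWrel.trans (lt_top_iff_ne_top.2 hrt)).ne
    have hcond : W ≪ P.prod (Q θ) ∧ Integrable (llr W (P.prod (Q θ))) W := by
      by_contra h
      exact hrelne (by unfold relEnt; rw [if_neg h])
    obtain ⟨hWac, hWllr⟩ := hcond
    have hrelEq : relEnt W (P.prod (Q θ)) = ENNReal.ofReal (∫ p, llr W (P.prod (Q θ)) p ∂W) := by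
      unfold relEnt
      rw [if_pos ⟨hWac, hWllr⟩]
    -- disintegration
    set K : ProbabilityTheory.Kernel A B := W.condKernel with hK
    have hdis : P.compProd K = W := by
      rw [hK, ← hWfst]
      exact W.disintegrate W.condKernel
    set h' : A → B → ℝ≥0∞ :=
      ProbabilityTheory.Kernel.rnDeriv K (ProbabilityTheory.Kernel.const A (Q θ)) with hh'
    have hh'm : Measurable (fun p : A × B => h' p.1 p.2) :=
      ProbabilityTheory.Kernel.measurable_rnDeriv _ _
    set ℓ : A × B → ℝ := fun p => Real.log (h' p.1 p.2).toReal with hℓ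
    have hℓm : StronglyMeasurable ℓ :=
      (Real.measurable_log.comp (ENNReal.measurable_toReal.comp hh'm)).stronglyMeasurable
    have hacPK : P.compProd K ≪ P.prod (Q θ) := by rw [hdis]; exact hWac
    have haeK : ∀ᵐ x ∂P, K x = (Q θ).withDensity (fun y => h' x y) :=
      ae_kernel_eq_withDensity hacPK
    have hWeq : W = (P.prod (Q θ)).withDensity (fun p => h' p.1 p.2) := by
      rw [← hdis]
      exact compProd_eq_withDensity hh'm haeK
    have hllrW : llr W (P.prod (Q θ)) =ᵐ[W] ℓ := by
      have h1 := llr_withDensity_ae (ν := P.prod (Q θ)) hh'm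
      rw [← hWeq] at h1
      exact h1
    have hℓint : Integrable ℓ W := hWllr.congr hllrW
    have hℓintc : Integrable ℓ (P.compProd K) := by rw [hdis]; exact hℓint
    -- distortion function
    set F : A → ℝ≥0∞ := fun x => ∫⁻ y, ENNReal.ofReal (ρ x y) ∂K x with hF
    have hρ'm : Measurable (fun p : A × B => ENNReal.ofReal (ρ p.1 p.2)) :=
      ENNReal.measurable_ofReal.comp hρmeas
    have hFm : Measurable F := Measurable.lintegral_kernel_prod_right' hρ'm
    have hFint : ∫⁻ x, F x ∂P ≤ ENNReal.ofReal D' := by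
      have h1 : ∫⁻ p, ENNReal.ofReal (ρ p.1 p.2) ∂(P.compProd K) = ∫⁻ x, F x ∂P :=
        Measure.lintegral_compProd hρ'm
      rw [← h1, hdis]
      exact hWdist
    set fdist : A → ℝ := fun x => (F x).toReal with hfdist
    have hfdm : Measurable fdist := hFm.ennreal_toReal
    have hfd0 : ∀ x, 0 ≤ fdist x := fun x => ENNReal.toReal_nonneg
    have hFint_ne : ∫⁻ x, F x ∂P ≠ ⊤ :=
      (hFint.trans_lt ENNReal.ofReal_lt_top).ne
    have hfdi : Integrable fdist P :=
      integrable_toReal_of_lintegral_ne_top hFm.aemeasurable hFint_ne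
    have hfd_le : ∫ x, fdist x ∂P ≤ D' := by
      rw [hfdist]
      have h1 : ∫ x, (F x).toReal ∂P = (∫⁻ x, F x ∂P).toReal := by
        rw [integral_toReal hFm.aemeasurable]
        exact (ae_lt_top hFm hFint_ne)
      rw [h1]
      calc (∫⁻ x, F x ∂P).toReal ≤ (ENNReal.ofReal D').toReal :=
            ENNReal.toReal_mono ENNReal.ofReal_ne_top hFint
      _ = D' := ENNReal.toReal_ofReal hD'0
    -- the conditional relative entropy function
    set gfun : A → ℝ := fun x => ∫ y, ℓ (x, y) ∂K x with hgfun
    have hgfm : StronglyMeasurable gfun := hℓm.integral_kernel_prod_right'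
    have hslices := (Measure.integrable_compProd_iff hℓintc.aestronglyMeasurable).mp hℓintc
    obtain ⟨hslice_ae, hnormint⟩ := hslices
    have hgfi : Integrable gfun P := by
      refine hnormint.mono' hgfm.aestronglyMeasurable ?_
      filter_upwards with x
      exact norm_integral_le_integral_norm _
    have hgibbs : ∀ᵐ x ∂P, 0 ≤ gfun x := by
      filter_upwards [haeK, hslice_ae] with x hx1 hx2
      have hxac : K x ≪ Q θ := by
        rw [hx1]
        exact withDensity_absolutelyContinuous _ _
      have hllrx : (fun y => ℓ (x, y)) =ᵐ[K x] llr (K x) (Q θ) := by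
        have h1 : (fun y => h' x y) =ᵐ[Q θ] (K x).rnDeriv (Q θ) :=
          ProbabilityTheory.Kernel.rnDeriv_eq_rnDeriv_measure
        have h2 := h1.filter_mono hxac.ae_le
        filter_upwards [h2] with y hy
        show Real.log (h' x y).toReal = llr (K x) (Q θ) y
        rw [hy, llr_def]
      have hil : Integrable (llr (K x) (Q θ)) (K x) := hx2.congr hllrx
      have h0 : 0 ≤ ∫ y, llr (K x) (Q θ) y ∂(K x) := integral_llr_nonneg' hxac hil
      calc (0:ℝ) ≤ ∫ y, llr (K x) (Q θ) y ∂(K x) := h0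
      _ = gfun x := (integral_congr_ae hllrx).symm
    set gplus : A → ℝ := fun x => max (gfun x) 0 with hgplus
    have hgpm : Measurable gplus := hgfm.measurable.max measurable_const
    have hgp0 : ∀ x, 0 ≤ gplus x := fun x => le_max_right _ _
    have hgple : ∀ x, gfun x ≤ gplus x := fun x => le_max_left _ _
    have hgpi : Integrable gplus P := hgfi.pos_part
    have hgp_int : ∫ x, gplus x ∂P = ∫ x, gfun x ∂P := by
      refine integral_congr_ae ?_
      filter_upwards [hgibbs] with x hx
      simp [hgplus, max_eq_left hx]
    have hfub : ∫ x, gfun x ∂P = ∫ p, ℓ p ∂W := by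
      rw [← hdis]
      exact (Measure.integral_compProd hℓintc).symm
    have hint_llr_eq : ∫ p, llr W (P.prod (Q θ)) p ∂W = ∫ p, ℓ p ∂W := integral_congr_ae hllrW
    have hrel_val : relEnt W (P.prod (Q θ)) = ENNReal.ofReal (∫ x, gplus x ∂P) := by
      rw [hrelEq, hint_llr_eq, ← hfub, hgp_int]
    -- the good set
    have hFfin : ∀ᵐ x ∂P, F x ≠ ⊤ := (ae_lt_top hFm hFint_ne).mono fun x hx => hx.ne
    have hFzero : D = 0 → ∀ᵐ x ∂P, F x = 0 := by
      intro h0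
      have hD'0' : D' = 0 := le_antisymm (h0 ▸ hD'leD) hD'0
      have h1 : ∫⁻ x, F x ∂P = 0 :=
        le_antisymm (by simpa [hD'0'] using hFint) (zero_le)
      rw [lintegral_eq_zero_iff hFm] at h1
      exact h1
    have hgood : ∀ᵐ x ∂P, (K x = (Q θ).withDensity (fun y => h' x y)
        ∧ Integrable (fun y => ℓ (x, y)) (K x) ∧ F x ≠ ⊤ ∧ (D = 0 → F x = 0)) := by
      rcases eq_or_ne D 0 with hDz | hDnz
      · filter_upwards [haeK, hslice_ae, hFfin, hFzero hDz] with x h1 h2 h3 h4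
        exact ⟨h1, h2, h3, fun _ => h4⟩
      · filter_upwards [haeK, hslice_ae, hFfin] with x h1 h2 h3
        exact ⟨h1, h2, h3, fun h => absurd h hDnz⟩
    obtain ⟨N₀, hN₀sub, hN₀meas, hN₀null⟩ :=
      exists_measurable_superset_of_null (ae_iff.mp hgood)
    set G : Set A := N₀ᶜ with hGdef
    have hGmeas : MeasurableSet G := hN₀meas.compl
    have hGcnull : P Gᶜ = 0 := by
      rw [hGdef, compl_compl]
      exact hN₀null
    have hGgood : ∀ x ∈ G, (K x = (Q θ).withDensity (fun y => h' x y)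
        ∧ Integrable (fun y => ℓ (x, y)) (K x) ∧ F x ≠ ⊤ ∧ (D = 0 → F x = 0)) := by
      intro x hx
      by_contra h
      exact hx (hN₀sub h)
    -- ergodic theorem applications
    have hIntF : Integrable (fun ω : ℕ → A => fdist (ω 0)) μ := by
      have h1 : Integrable fdist (μ.map (fun ω : ℕ → A => ω 0)) := by rw [← hP]; exact hfdi
      exact (integrable_map_measure hfdm.aestronglyMeasurable
        (measurable_pi_apply 0).aemeasurable).mp h1
    have hIntG : Integrable (fun ω : ℕ → A => gplus (ω 0)) μ := by
      have h1 : Integrable gplus (μ.map (fun ω : ℕ → A => ω 0)) := by rw [← hP]; exact hgpi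
      exact (integrable_map_measure hgpm.aestronglyMeasurable
        (measurable_pi_apply 0).aemeasurable).mp h1
    have hmeanF : ∫ ω', fdist (ω' 0) ∂μ = ∫ x, fdist x ∂P := by
      rw [hP]
      exact (integral_map (measurable_pi_apply 0).aemeasurable hfdm.aestronglyMeasurable).symm
    have hmeanG : ∫ ω', gplus (ω' 0) ∂μ = ∫ x, gplus x ∂P := by
      rw [hP]
      exact (integral_map (measurable_pi_apply 0).aemeasurable hgpm.aestronglyMeasurable).symm
    have hsum_shift : ∀ (v : A → ℝ) (ω : ℕ → A) (n : ℕ),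
        ∑ k ∈ Finset.range n, v (shift^[k] ω 0) = ∑ k ∈ Finset.range n, v (ω k) := by
      intro v ω n
      refine Finset.sum_congr rfl fun k _ => ?_
      rw [shift_iterate_apply, Nat.zero_add]
    have hergF : ∀ᵐ ω ∂μ, limsup (fun n : ℕ => ENNReal.ofReal
        ((n : ℝ)⁻¹ * ∑ k ∈ Finset.range n, fdist (ω k))) atTop
        ≤ ENNReal.ofReal (∫ x, fdist x ∂P) := by
      have h := ergodic_limsup_avg_le herg (hfdm.comp (measurable_pi_apply 0))
        (fun ω => hfd0 _) hIntF
      filter_upwards [h] with ω hω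
      rw [← hmeanF]
      have heq : (fun n : ℕ => ENNReal.ofReal ((n : ℝ)⁻¹ * ∑ k ∈ Finset.range n, fdist (ω k)))
          = (fun n : ℕ => ENNReal.ofReal
            ((n : ℝ)⁻¹ * ∑ k ∈ Finset.range n, fdist (shift^[k] ω 0))) := by
        funext n
        rw [hsum_shift fdist ω n]
      rw [heq]
      exact hω
    have hergG : ∀ᵐ ω ∂μ, limsup (fun n : ℕ => ENNReal.ofReal
        ((n : ℝ)⁻¹ * ∑ k ∈ Finset.range n, gplus (ω k))) atTop
        ≤ ENNReal.ofReal (∫ x, gplus x ∂P) := by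
      have h := ergodic_limsup_avg_le herg (hgpm.comp (measurable_pi_apply 0))
        (fun ω => hgp0 _) hIntG
      filter_upwards [h] with ω hω
      rw [← hmeanG]
      have heq : (fun n : ℕ => ENNReal.ofReal ((n : ℝ)⁻¹ * ∑ k ∈ Finset.range n, gplus (ω k)))
          = (fun n : ℕ => ENNReal.ofReal
            ((n : ℝ)⁻¹ * ∑ k ∈ Finset.range n, gplus (shift^[k] ω 0))) := by
        funext n
        rw [hsum_shift gplus ω n]
      rw [heq]
      exact hω
    -- pointwise conclusion
    filter_upwards [hergF, hergG, hae_coords G hGmeas hGcnull] with ω hωF hωG hωcoords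
    -- eventual distortion bound
    have hev_dist : ∀ᶠ n : ℕ in atTop,
        ((n : ℝ≥0∞))⁻¹ * ∑ k ∈ Finset.range n, F (ω k) ≤ ENNReal.ofReal D := by
      rcases hgap with hD0 | hD'lt
      · refine Filter.Eventually.of_forall fun n => ?_
        have hFk : ∀ k, F (ω k) = 0 := fun k => (hGgood _ (hωcoords k)).2.2.2 hD0
        simp [Finset.sum_congr rfl fun k _ => hFk k]
      · have hDpos : 0 < D := lt_of_le_of_lt hD'0 hD'lt
        have hltD : ENNReal.ofReal (∫ x, fdist x ∂P) < ENNReal.ofReal D :=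
          lt_of_le_of_lt (ENNReal.ofReal_le_ofReal hfd_le)
            ((ENNReal.ofReal_lt_ofReal_iff hDpos).2 hD'lt)
        have hev := eventually_lt_of_limsup_lt (lt_of_le_of_lt hωF hltD)
        filter_upwards [hev, eventually_ge_atTop 1] with n hn hn1
        have hn0 : (0:ℝ) < n := by positivity
        have hFk : ∀ k, F (ω k) = ENNReal.ofReal (fdist (ω k)) := fun k =>
          (ENNReal.ofReal_toReal (hGgood _ (hωcoords k)).2.2.1).symm
        calc ((n : ℝ≥0∞))⁻¹ * ∑ k ∈ Finset.range n, F (ω k)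
            = ENNReal.ofReal ((n : ℝ)⁻¹ * ∑ k ∈ Finset.range n, fdist (ω k)) := by
              rw [Finset.sum_congr rfl fun k _ => hFk k,
                ← ENNReal.ofReal_sum_of_nonneg (fun k _ => hfd0 _),
                ENNReal.ofReal_mul (by positivity), ENNReal.ofReal_inv_of_pos hn0,
                ENNReal.ofReal_natCast]
        _ ≤ ENNReal.ofReal D := hn.le
    -- eventual relEnt bound
    have hfinal_n : ∀ᶠ n : ℕ in atTop, RTh ρ Q (empMeas ω n) D
        ≤ ENNReal.ofReal ((n : ℝ)⁻¹ * ∑ k ∈ Finset.range n, gplus (ω k)) := by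
      filter_upwards [hev_dist, eventually_ge_atTop 1] with n hdistn hn1
      haveI hPnprob : IsProbabilityMeasure (empMeas ω n) := ⟨empMeas_univ ω hn1⟩
      have hPnG : ∀ᵐ x ∂(empMeas ω n), x ∈ G := by
        rw [ae_iff]
        have h0 : (empMeas ω n) Gᶜ = 0 := by
          rw [empMeas]
          simp only [Measure.smul_apply, Measure.coe_finset_sum, Finset.sum_apply, smul_eq_mul]
          have hz : ∀ k ∈ Finset.range n, (Measure.dirac (ω k)) Gᶜ = 0 := by
            intro k _
            rw [Measure.dirac_apply' _ hGmeas.compl]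
            simp [Set.indicator_of_notMem, hωcoords k]
          rw [Finset.sum_congr rfl hz]
          simp
        exact h0
      have haeKn : ∀ᵐ x ∂(empMeas ω n), K x = (Q θ).withDensity (fun y => h' x y) :=
        hPnG.mono fun x hx => (hGgood x hx).1
      set Wn := (empMeas ω n).compProd K with hWn
      have hWneq : Wn = ((empMeas ω n).prod (Q θ)).withDensity (fun p => h' p.1 p.2) :=
        compProd_eq_withDensity hh'm haeKn
      haveI : IsProbabilityMeasure Wn := by
        rw [hWn]
        infer_instance
      have hWnfst : Wn.fst = empMeas ω n := Measure.fst_compProd _ _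
      have hWndist : ∫⁻ p, ENNReal.ofReal (ρ p.1 p.2) ∂Wn ≤ ENNReal.ofReal D := by
        have h1 : ∫⁻ p, ENNReal.ofReal (ρ p.1 p.2) ∂Wn = ∫⁻ x, F x ∂(empMeas ω n) :=
          Measure.lintegral_compProd hρ'm
        rw [h1, lintegral_empMeas _ _ hFm]
        exact hdistn
      have hWnmem : Wn ∈ Wset ρ (empMeas ω n) D := ⟨inferInstance, hWnfst, hWndist⟩
      have hWnac : Wn ≪ (empMeas ω n).prod (Q θ) := by
        rw [hWneq]
        exact withDensity_absolutelyContinuous _ _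
      have hllrn : llr Wn ((empMeas ω n).prod (Q θ)) =ᵐ[Wn] ℓ := by
        have h1 := llr_withDensity_ae (ν := (empMeas ω n).prod (Q θ)) hh'm
        rw [← hWneq] at h1
        exact h1
      have hℓintn : Integrable ℓ Wn := by
        rw [hWn]
        refine (Measure.integrable_compProd_iff hℓm.aestronglyMeasurable).mpr ⟨?_, ?_⟩
        · exact hPnG.mono fun x hx => (hGgood x hx).2.1
        · exact integrable_empMeas ω n (hℓm.norm.integral_kernel_prod_right')
      have hllrintn : Integrable (llr Wn ((empMeas ω n).prod (Q θ))) Wn :=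
        hℓintn.congr hllrn.symm
      have hrelEqn : relEnt Wn ((empMeas ω n).prod (Q θ))
          = ENNReal.ofReal (∫ p, llr Wn ((empMeas ω n).prod (Q θ)) p ∂Wn) := by
        unfold relEnt
        rw [if_pos ⟨hWnac, hllrintn⟩]
      have hintn : ∫ p, llr Wn ((empMeas ω n).prod (Q θ)) p ∂Wn
          = (n : ℝ)⁻¹ * ∑ k ∈ Finset.range n, gfun (ω k) := by
        rw [integral_congr_ae hllrn]
        have h1 : ∫ p, ℓ p ∂Wn = ∫ x, gfun x ∂(empMeas ω n) := by
          rw [hWn]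
          exact Measure.integral_compProd (by rw [← hWn]; exact hℓintn)
        rw [h1, integral_empMeas _ _ hgfm]
      have hsum_le : (n : ℝ)⁻¹ * ∑ k ∈ Finset.range n, gfun (ω k)
          ≤ (n : ℝ)⁻¹ * ∑ k ∈ Finset.range n, gplus (ω k) := by
        apply mul_le_mul_of_nonneg_left _ (by positivity)
        exact Finset.sum_le_sum fun k _ => hgple _
      calc RTh ρ Q (empMeas ω n) D ≤ RQ ρ (empMeas ω n) (Q θ) D := by
            simp only [RTh]
            exact iInf_le _ θ
      _ ≤ relEnt Wn ((empMeas ω n).prod (Q θ)) := by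
            simp only [RQ]
            exact iInf₂_le Wn hWnmem
      _ = ENNReal.ofReal (∫ p, llr Wn ((empMeas ω n).prod (Q θ)) p ∂Wn) := hrelEqn
      _ ≤ ENNReal.ofReal ((n : ℝ)⁻¹ * ∑ k ∈ Finset.range n, gplus (ω k)) := by
            rw [hintn]
            exact ENNReal.ofReal_le_ofReal hsum_le
    calc limsup (fun n => RTh ρ Q (empMeas ω n) D) atTop
        ≤ limsup (fun n : ℕ => ENNReal.ofReal
          ((n : ℝ)⁻¹ * ∑ k ∈ Finset.range n, gplus (ω k))) atTop :=
          limsup_le_limsup hfinal_n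
    _ ≤ ENNReal.ofReal (∫ x, gplus x ∂P) := hωG
    _ = relEnt W (P.prod (Q θ)) := hrel_val.symm
    _ ≤ r := hWrel.le
  -- conclude from `main`
  have hfin : ∀ m : ℕ, ∀ᵐ ω ∂μ, limsup (fun n => RTh ρ Q (empMeas ω n) D) atTop
      ≤ RTh ρ Q P D + ((m : ℝ≥0∞) + 1)⁻¹ := by
    intro m
    refine main _ (ENNReal.lt_add_right hRtop ?_) ?_
    · exact ENNReal.inv_ne_zero.2 (by simp)
    · exact ENNReal.add_ne_top.2 ⟨hRtop, by simp [ENNReal.inv_ne_top]⟩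
  rw [← ae_all_iff] at hfin
  filter_upwards [hfin] with ω hω
  refine ENNReal.le_of_forall_pos_le_add fun ε hε _ => ?_
  obtain ⟨m, hm⟩ := ENNReal.exists_inv_nat_lt (show ((ε : ℝ≥0∞)) ≠ 0 by
    simpa using hε.ne')
  calc limsup (fun n => RTh ρ Q (empMeas ω n) D) atTop
      ≤ RTh ρ Q P D + ((m : ℝ≥0∞) + 1)⁻¹ := hω m
  _ ≤ RTh ρ Q P D + ε := by
      gcongr
      refine le_of_lt (lt_of_le_of_lt ?_ hm)
      exact ENNReal.inv_le_inv.2 (by simp)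
end

section
/- For any probability measures P and P' on A, any probability measure Q on Â, any D ≥ 0 and any ε ∈ (0,1): R₁(εP' + (1−ε)P, Q, D) ≥ ε R₁(P', Q, D/ε). Consequently, for any family {Q_θ : θ ∈ Θ}, R₁^Θ(εP' + (1−ε)P, D) ≥ ε R₁^Θ(P', D/ε). -/
/-! Let `M = ε • P' + (1 - ε) • P`, so that `ε • P' ≤ M`. A coupling `W ∈ W(M, D)` of finite
relative entropy has a density `g` with respect to `M × Q`, and the same density turns `P' × Q`
into a coupling `W'` of `P'`: the first marginal of `W` being `M` means `∫ g(a, ·) dQ = 1` for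
`M`-a.e. `a`, hence for `P'`-a.e. `a`. Since `ε • W' ≤ W`, the coupling `W'` lies in
`W(P', D / ε)`, and writing relative entropy as the `f`-divergence `∫ klFun g d(M × Q)`, whose
integrand is nonnegative, gives `H(W ‖ M × Q) ≥ ε H(W' ‖ P' × Q)`. -/

open MeasureTheory ProbabilityTheory Filter Topology Set
open scoped ENNReal NNReal

noncomputable section

open InformationTheory

lemma relEnt_eq_klDiv {X : Type*} [MeasurableSpace X] {μ ν : Measure X}
    (h : μ univ = ν univ) : relEnt μ ν = klDiv μ ν := by
  rw [relEnt, klDiv_def]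
  simp [measureReal_def, h]

lemma withDensity_mono_measure {X : Type*} [MeasurableSpace X] {ν₁ ν : Measure X}
    (hν : ν₁ ≤ ν) (g : X → ℝ≥0∞) : ν₁.withDensity g ≤ ν.withDensity g :=
  Measure.le_intro fun s hs _ ↦ by
    simpa only [withDensity_apply _ hs] using
      lintegral_mono' (Measure.restrict_mono subset_rfl hν) le_rfl

lemma klDiv_withDensity_le_of_le {X : Type*} [MeasurableSpace X] {ν₁ ν : Measure X}
    [IsFiniteMeasure ν] (hν : ν₁ ≤ ν) {g : X → ℝ≥0∞} (hg : Measurable g)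
    [IsFiniteMeasure (ν.withDensity g)] :
    klDiv (ν₁.withDensity g) ν₁ ≤ klDiv (ν.withDensity g) ν := by
  have : IsFiniteMeasure ν₁ := isFiniteMeasure_of_le ν hν
  have : IsFiniteMeasure (ν₁.withDensity g) :=
    isFiniteMeasure_of_le _ (withDensity_mono_measure hν g)
  have klDiv_eq {μ : Measure X} [IsFiniteMeasure μ] [IsFiniteMeasure (μ.withDensity g)] :
      klDiv (μ.withDensity g) μ = ∫⁻ x, ENNReal.ofReal (klFun (g x).toReal) ∂μ := by
    rw [klDiv_eq_lintegral_klFun_of_ac (withDensity_absolutelyContinuous _ _)]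
    refine lintegral_congr_ae ?_
    filter_upwards [Measure.rnDeriv_withDensity μ hg] with x hx
    rw [hx]
  rw [klDiv_eq, klDiv_eq]
  exact lintegral_mono' hν le_rfl

section Marginal

variable {A B : Type*} [MeasurableSpace A] [MeasurableSpace B] {Q : Measure B} [SFinite Q]
  {g : A × B → ℝ≥0∞}

lemma fst_withDensity_prod (μ : Measure A) [SFinite μ] (hg : Measurable g) :
    ((μ.prod Q).withDensity g).fst = μ.withDensity fun a ↦ ∫⁻ b, g (a, b) ∂Q := by
  ext s hs
  rw [Measure.fst_apply hs, withDensity_apply _ (measurable_fst hs), withDensity_apply _ hs,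
    ← Set.prod_univ, ← Measure.prod_restrict, Measure.restrict_univ,
    lintegral_prod _ hg.aemeasurable]

lemma fst_withDensity_prod_of_absolutelyContinuous {μ ν : Measure A} [SFinite μ] [SigmaFinite ν]
    (hμν : μ ≪ ν) (hg : Measurable g) (hν : ((ν.prod Q).withDensity g).fst = ν) :
    ((μ.prod Q).withDensity g).fst = μ := by
  have hg' : Measurable fun a ↦ ∫⁻ b, g (a, b) ∂Q := hg.lintegral_prod_right'
  rw [fst_withDensity_prod _ hg] at hν ⊢
  have h_one : (fun a ↦ ∫⁻ b, g (a, b) ∂Q) =ᵐ[ν] 1 :=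
    (withDensity_eq_iff_of_sigmaFinite hg'.aemeasurable aemeasurable_one).mp
      (hν.trans withDensity_one.symm)
  rw [withDensity_congr_ae (hμν.ae_eq h_one), withDensity_one]

end Marginal

section RateDistortion

variable {A B : Type*} [MeasurableSpace A] [MeasurableSpace B] (ρ : A → B → ℝ)
  {P M : Measure A} [IsProbabilityMeasure P] [IsProbabilityMeasure M] {c : ℝ}

lemma mul_RQ_div_le_RQ_of_smul_le (Q : Measure B) [IsProbabilityMeasure Q] (hc : 0 < c)
    (hP : ENNReal.ofReal c • P ≤ M) (D : ℝ) :
    ENNReal.ofReal c * RQ ρ P Q (D / c) ≤ RQ ρ M Q D := by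
  refine le_iInf₂ fun W ⟨hW_prob, hW_fst, hW_dist⟩ ↦ ?_
  rw [relEnt_eq_klDiv (by simp)]
  by_cases hW_ac : W ≪ M.prod Q
  swap
  · rw [klDiv_of_not_ac hW_ac]
    exact le_top
  set g := W.rnDeriv (M.prod Q)
  have hg : Measurable g := Measure.measurable_rnDeriv _ _
  have hW : (M.prod Q).withDensity g = W := Measure.withDensity_rnDeriv_eq _ _ hW_ac
  have hc0 : ENNReal.ofReal c ≠ 0 := (ENNReal.ofReal_pos.mpr hc).ne'
  have hPM : P ≪ M :=
    (Measure.absolutelyContinuous_smul hc0).trans (Measure.absolutelyContinuous_of_le hP)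
  set W' := (P.prod Q).withDensity g
  have hW'_fst : W'.fst = P :=
    fst_withDensity_prod_of_absolutelyContinuous hPM hg (hW ▸ hW_fst)
  have hW'_prob : IsProbabilityMeasure W' := ⟨by rw [← Measure.fst_univ, hW'_fst, measure_univ]⟩
  have hsmul_W' : ENNReal.ofReal c • W' = ((ENNReal.ofReal c • P).prod Q).withDensity g := by
    rw [Measure.prod_smul_left, withDensity_smul_measure]
  have hW'_le : ENNReal.ofReal c • W' ≤ W :=
    hsmul_W' ▸ hW ▸ withDensity_mono_measure (Measure.prod_mono hP le_rfl) g
  have hW'_dist : ∫⁻ p, ENNReal.ofReal (ρ p.1 p.2) ∂W' ≤ ENNReal.ofReal (D / c) := by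
    rw [ENNReal.ofReal_div_of_pos hc,
      ENNReal.le_div_iff_mul_le (.inl hc0) (.inl ENNReal.ofReal_ne_top), mul_comm,
      ← smul_eq_mul, ← lintegral_smul_measure]
    exact (lintegral_mono' hW'_le le_rfl).trans hW_dist
  calc ENNReal.ofReal c * RQ ρ P Q (D / c)
      ≤ ENNReal.ofReal c * klDiv W' (P.prod Q) := by
        rw [← relEnt_eq_klDiv (by simp)]
        exact mul_le_mul_right (iInf₂_le W' ⟨hW'_prob, hW'_fst, hW'_dist⟩) _
    _ = klDiv (ENNReal.ofReal c • W') (ENNReal.ofReal c • P.prod Q) := (klDiv_smul_same _).symm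
    _ ≤ klDiv W (M.prod Q) := by
        rw [hsmul_W', ← Measure.prod_smul_left, ← hW]
        exact klDiv_withDensity_le_of_le (Measure.prod_mono hP le_rfl) hg

lemma mul_RTh_div_le_RTh_of_smul_le {Θ : Type*} (Q : Θ → Measure B)
    (hQ : ∀ θ, IsProbabilityMeasure (Q θ)) (hc : 0 < c) (hP : ENNReal.ofReal c • P ≤ M) (D : ℝ) :
    ENNReal.ofReal c * RTh ρ Q P (D / c) ≤ RTh ρ Q M D :=
  le_iInf fun θ ↦
    have := hQ θ
    (mul_le_mul_right (iInf_le _ θ) _).trans (mul_RQ_div_le_RQ_of_smul_le ρ (Q θ) hc hP D)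

end RateDistortion

lemma isProbabilityMeasure_ofReal_smul_add {A : Type*} [MeasurableSpace A] (μ ν : Measure A)
    [IsProbabilityMeasure μ] [IsProbabilityMeasure ν] {t : ℝ} (ht : t ∈ Set.Icc (0 : ℝ) 1) :
    IsProbabilityMeasure (ENNReal.ofReal t • μ + ENNReal.ofReal (1 - t) • ν) :=
  ⟨by simp [← ENNReal.ofReal_add ht.1 (sub_nonneg.mpr ht.2)]⟩

theorem mixture_inequality_general
    {A B Θ : Type*} [MeasurableSpace A] [MeasurableSpace B]
    (ρ : A → B → ℝ)
    (P P' : Measure A) [IsProbabilityMeasure P] [IsProbabilityMeasure P']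
    (Qm : Measure B) [IsProbabilityMeasure Qm]
    (Q : Θ → Measure B) (hQ : ∀ θ, IsProbabilityMeasure (Q θ))
    (D : ℝ) (ε : ℝ) (hε : ε ∈ Set.Ioo (0:ℝ) 1) :
    ENNReal.ofReal ε * RQ ρ P' Qm (D / ε)
        ≤ RQ ρ (ENNReal.ofReal ε • P' + ENNReal.ofReal (1 - ε) • P) Qm D
    ∧ ENNReal.ofReal ε * RTh ρ Q P' (D / ε)
        ≤ RTh ρ Q (ENNReal.ofReal ε • P' + ENNReal.ofReal (1 - ε) • P) D := by
  have := isProbabilityMeasure_ofReal_smul_add P' P (Set.Ioo_subset_Icc_self hε)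
  have hP' : ENNReal.ofReal ε • P' ≤ ENNReal.ofReal ε • P' + ENNReal.ofReal (1 - ε) • P :=
    Measure.le_add_right le_rfl
  exact ⟨mul_RQ_div_le_RQ_of_smul_le ρ Qm hε.1 hP' D,
    mul_RTh_div_le_RTh_of_smul_le ρ Q hQ hε.1 hP' D⟩

/-- Mixture inequality: for `ε ∈ (0,1)`,
`R₁(εP' + (1-ε)P, Q, D) ≥ ε R₁(P', Q, D/ε)`, and consequently
`R₁^Θ(εP' + (1-ε)P, D) ≥ ε R₁^Θ(P', D/ε)`. -/
theorem mixture_inequality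
    {A B Θ : Type*} [MeasurableSpace A] [MeasurableSpace B]
    [StandardBorelSpace A] [StandardBorelSpace B]
    (ρ : A → B → ℝ) (hρmeas : Measurable (Function.uncurry ρ))
    (hρnn : ∀ x y, 0 ≤ ρ x y)
    (P P' : Measure A) [IsProbabilityMeasure P] [IsProbabilityMeasure P']
    (Qm : Measure B) [IsProbabilityMeasure Qm]
    (Q : Θ → Measure B) (hQ : ∀ θ, IsProbabilityMeasure (Q θ))
    (D : ℝ) (hD : 0 ≤ D) (ε : ℝ) (hε : ε ∈ Set.Ioo (0:ℝ) 1) :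
    ENNReal.ofReal ε * RQ ρ P' Qm (D / ε)
        ≤ RQ ρ (ENNReal.ofReal ε • P' + ENNReal.ofReal (1 - ε) • P) Qm D
    ∧ ENNReal.ofReal ε * RTh ρ Q P' (D / ε)
        ≤ RTh ρ Q (ENNReal.ofReal ε • P' + ENNReal.ofReal (1 - ε) • P) D :=
  mixture_inequality_general ρ P P' Qm Q hQ D ε hε
end
end

section
/- Let A = Â = {1,2,3,…}, let P' be a probability distribution on A with infinite entropy H(P') = ∞ and P'(x) > 0 for all x, and let ρ(x,y) := P'(x)^{-1}·1{x ≠ y} + |x − y|. Then: (i) any pair of random variables (U,V) with values in A × Â, U ∼ P' and E[ρ(U,V)] < ∞ satisfies I(U;V) = ∞; hence R₁(P', D) = ∞ for every D ≥ 0. (ii) Consequently, for any probability distribution P on A with finite entropy H(P) < ∞ and any D ≥ 0, setting P_ε := (1−ε)P + εP' for ε ∈ (0,1), one has P_ε → P in total variation as ε ↓ 0 while R₁(P_ε, D) = ∞ for every ε ∈ (0,1) and R₁(P, D) ≤ H(P) < ∞; so the map P ↦ R₁(P,D) is discontinuous in the topology of total variation at every P where it is finite. -/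
open MeasureTheory ProbabilityTheory Filter Topology Set
open scoped ENNReal NNReal

noncomputable section

/-- The Shannon entropy (in nats) of a discrete distribution on `ℕ`. -/
def discEntropy (P : Measure ℕ) : ℝ≥0∞ :=
  ∑' x : ℕ, ENNReal.ofReal (Real.negMulLog ((P {x}).toReal))

/-!
Let `W` be a coupling with marginals `P` and `Q`. Take any positive weights `g(x,y)` with
`∑ₓ g(x,y) ≤ 1` for every `y`. Applying Gibbs' inequality `a log(q g / a) ≤ q g` atom by atom gives
`H(P) ≤ ∫ |log dW/d(P×Q)| dW + 1 + ∫ log(1/g) dW`.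
For the two-sided geometric weights `g(x,y) = 2^{-(|x-y|+2)}`, the last term equals
`(E|U-V| + 2) log 2`. So finite expected distortion together with finite mutual information
would force `H(P') < ∞`. The mixtures inherit infinite entropy from `P'` because `-t log t` is
concave. The diagonal coupling gives `R₁(P,D) ≤ H(P)`.
-/
open Real in
lemma mul_log_inv_le {a p q g : ℝ} (ha : 0 < a) (hp : 0 < p) (hq : 0 < q) (hg : 0 < g) :
    a * log p⁻¹ ≤ a * log (a / (p * q)) + q * g + a * log g⁻¹ := by
  have hsplit : log (a / (p * q)) + log g⁻¹ - log p⁻¹ + log (q * g / a) = 0 := by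
    rw [log_div ha.ne' (by positivity), log_mul hp.ne' hq.ne', log_inv, log_inv,
      log_div (by positivity) ha.ne', log_mul hq.ne' hg.ne']
    ring
  have hgibbs : a * log (q * g / a) ≤ q * g - a := by
    calc a * log (q * g / a) ≤ a * (q * g / a - 1) :=
          mul_le_mul_of_nonneg_left (log_le_sub_one_of_pos (by positivity)) ha.le
      _ = q * g - a := by field_simp
  linear_combination (-a) * hsplit + hgibbs + ha

lemma rnDeriv_eq_measure_singleton_div {α : Type*} [MeasurableSpace α] [MeasurableSingletonClass α]
    {μ ν : Measure α} [IsFiniteMeasure μ] [IsFiniteMeasure ν]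
    (hμν : μ ≪ ν) {a : α} (ha : ν {a} ≠ 0) : μ.rnDeriv ν a = μ {a} / ν {a} := by
  rw [← Measure.setLIntegral_rnDeriv hμν {a}, lintegral_singleton,
    ENNReal.mul_div_cancel_right ha (measure_ne_top ν _)]

lemma llr_eq_log_measure_singleton_div {α : Type*} [MeasurableSpace α]
    [MeasurableSingletonClass α] {μ ν : Measure α} [IsFiniteMeasure μ] [IsFiniteMeasure ν]
    (hμν : μ ≪ ν) {a : α} (ha : ν {a} ≠ 0) :
    llr μ ν a = Real.log ((μ {a}).toReal / (ν {a}).toReal) := by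
  simp only [llr_def]
  rw [rnDeriv_eq_measure_singleton_div hμν ha, ENNReal.toReal_div]

lemma absolutelyContinuous_of_measure_singleton {α : Type*} [MeasurableSpace α] [Countable α]
    {μ ν : Measure α} (h : ∀ a, ν {a} = 0 → μ {a} = 0) : μ ≪ ν := by
  intro s hs
  rw [measure_null_iff_singleton s.to_countable] at hs ⊢
  exact fun a ha => h a (hs a ha)

lemma measure_singleton_le_fst {α β : Type*} [MeasurableSpace α] [MeasurableSpace β]
    [MeasurableSingletonClass α] (W : Measure (α × β)) (z : α × β) : W {z} ≤ W.fst {z.1} := by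
  rw [Measure.fst_apply (measurableSet_singleton _)]
  exact measure_mono (by simp)

lemma measure_singleton_le_snd {α β : Type*} [MeasurableSpace α] [MeasurableSpace β]
    [MeasurableSingletonClass β] (W : Measure (α × β)) (z : α × β) : W {z} ≤ W.snd {z.2} := by
  rw [Measure.snd_apply (measurableSet_singleton _)]
  exact measure_mono (by simp)

lemma measure_singleton_fst_prod_snd {α β : Type*} [MeasurableSpace α] [MeasurableSpace β]
    (W : Measure (α × β)) [IsFiniteMeasure W] (x : α) (y : β) :
    W.fst.prod W.snd {(x, y)} = W.fst {x} * W.snd {y} := by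
  rw [← Set.singleton_prod_singleton, Measure.prod_prod]

lemma absolutelyContinuous_fst_prod_snd {α β : Type*} [MeasurableSpace α] [MeasurableSpace β]
    [MeasurableSingletonClass α] [MeasurableSingletonClass β] [Countable α] [Countable β]
    (W : Measure (α × β)) [IsFiniteMeasure W] : W ≪ W.fst.prod W.snd := by
  refine absolutelyContinuous_of_measure_singleton fun ⟨x, y⟩ h => ?_
  rw [measure_singleton_fst_prod_snd, mul_eq_zero] at h
  rcases h with h | h
  · exact le_zero_iff.1 (h ▸ measure_singleton_le_fst W (x, y))
  · exact le_zero_iff.1 (h ▸ measure_singleton_le_snd W (x, y))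

lemma relEnt_eq_lintegral_of_llr_ae_eq {X : Type*} [MeasurableSpace X] {μ ν : Measure X}
    {f : X → ℝ} (hμν : μ ≪ ν) (hf : 0 ≤ f) (hfm : AEStronglyMeasurable f μ)
    (hllr : llr μ ν =ᵐ[μ] f) (hfin : ∫⁻ x, ENNReal.ofReal (f x) ∂μ ≠ ⊤) :
    relEnt μ ν = ∫⁻ x, ENNReal.ofReal (f x) ∂μ := by
  have hf_int : Integrable f μ :=
    ⟨hfm, (hasFiniteIntegral_iff_ofReal (Eventually.of_forall hf)).2 hfin.lt_top⟩
  rw [relEnt, if_pos ⟨hμν, hf_int.congr hllr.symm⟩, integral_congr_ae hllr,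
    ofReal_integral_eq_lintegral_ofReal hf_int (Eventually.of_forall hf)]

lemma discEntropy_eq_lintegral (P : Measure ℕ) [IsFiniteMeasure P] :
    discEntropy P = ∫⁻ x, ENNReal.ofReal (Real.log (P {x}).toReal⁻¹) ∂P := by
  rw [discEntropy, lintegral_countable']
  congr 1 with x
  rw [← ENNReal.ofReal_toReal (measure_ne_top P {x}), ENNReal.toReal_ofReal ENNReal.toReal_nonneg,
    ← ENNReal.ofReal_mul' ENNReal.toReal_nonneg, Real.negMulLog, Real.log_inv]
  ring_nf

section Coupling

variable {β : Type*} [MeasurableSpace β] [MeasurableSingletonClass β]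
  (W : Measure (ℕ × β))

lemma surprisal_mul_le [IsFiniteMeasure W] (hac : W ≪ W.fst.prod W.snd) {g : ℕ × β → ℝ}
    (hg : ∀ z, 0 < g z) (z : ℕ × β) :
    ENNReal.ofReal (Real.log (W.fst {z.1}).toReal⁻¹) * W {z} ≤
      ‖llr W (W.fst.prod W.snd) z‖ₑ * W {z} + ENNReal.ofReal (g z) * W.snd {z.2}
        + ENNReal.ofReal (Real.log (g z)⁻¹) * W {z} := by
  obtain ⟨x, y⟩ := z
  by_cases hz : W {(x, y)} = 0
  · simp [hz]
  set a := (W {(x, y)}).toReal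
  set p := (W.fst {x}).toReal
  set q := (W.snd {y}).toReal
  have ha : 0 < a := ENNReal.toReal_pos hz (measure_ne_top _ _)
  have hp : 0 < p := ha.trans_le
    (ENNReal.toReal_mono (measure_ne_top _ _) (measure_singleton_le_fst W (x, y)))
  have hq : 0 < q := ha.trans_le
    (ENNReal.toReal_mono (measure_ne_top _ _) (measure_singleton_le_snd W (x, y)))
  have hllr : llr W (W.fst.prod W.snd) (x, y) = Real.log (a / (p * q)) := by
    rw [llr_eq_log_measure_singleton_div hac (fun h => hz (hac h)),
      measure_singleton_fst_prod_snd, ENNReal.toReal_mul]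
  rw [← ENNReal.ofReal_toReal (measure_ne_top W {(x, y)}),
    ← ENNReal.ofReal_toReal (measure_ne_top W.snd {y}), hllr, Real.enorm_eq_ofReal_abs,
    ← ENNReal.ofReal_mul' ha.le, ← ENNReal.ofReal_mul' ha.le, ← ENNReal.ofReal_mul' hq.le,
    ← ENNReal.ofReal_mul' ha.le]
  calc ENNReal.ofReal (Real.log p⁻¹ * a)
      ≤ ENNReal.ofReal (|Real.log (a / (p * q))| * a + g (x, y) * q
          + Real.log (g (x, y))⁻¹ * a) := by
        refine ENNReal.ofReal_le_ofReal ?_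
        nlinarith [mul_log_inv_le ha hp hq (hg (x, y)), le_abs_self (Real.log (a / (p * q)))]
    _ ≤ _ := ENNReal.ofReal_add_le.trans (by gcongr; exact ENNReal.ofReal_add_le)

lemma discEntropy_fst_le [Countable β] [IsProbabilityMeasure W] (hac : W ≪ W.fst.prod W.snd)
    {g : ℕ × β → ℝ} (hg : ∀ z, 0 < g z) (hg_sum : ∀ y, ∑' x, ENNReal.ofReal (g (x, y)) ≤ 1) :
    discEntropy W.fst ≤ ∫⁻ z, ‖llr W (W.fst.prod W.snd) z‖ₑ ∂W + 1
      + ∫⁻ z, ENNReal.ofReal (Real.log (g z)⁻¹) ∂W := by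
  have hkernel : ∑' z : ℕ × β, ENNReal.ofReal (g z) * W.snd {z.2} ≤ 1 :=
    calc ∑' z : ℕ × β, ENNReal.ofReal (g z) * W.snd {z.2}
        = ∑' y, (∑' x, ENNReal.ofReal (g (x, y))) * W.snd {y} := by
          rw [ENNReal.tsum_prod', ENNReal.tsum_comm]
          simp_rw [ENNReal.tsum_mul_right]
      _ ≤ ∑' y, W.snd {y} := ENNReal.tsum_le_tsum fun y => mul_le_of_le_one_left' (hg_sum y)
      _ = 1 := by simpa using (lintegral_countable' (μ := W.snd) 1).symm
  calc discEntropy W.fst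
      = ∑' z, ENNReal.ofReal (Real.log (W.fst {z.1}).toReal⁻¹) * W {z} := by
        rw [discEntropy_eq_lintegral, ← lintegral_countable']
        exact lintegral_map (measurable_of_countable _) measurable_fst
    _ ≤ ∑' z, (‖llr W (W.fst.prod W.snd) z‖ₑ * W {z} + ENNReal.ofReal (g z) * W.snd {z.2}
          + ENNReal.ofReal (Real.log (g z)⁻¹) * W {z}) :=
        ENNReal.tsum_le_tsum (surprisal_mul_le W hac hg)
    _ ≤ _ := by
        rw [ENNReal.tsum_add, ENNReal.tsum_add, lintegral_countable', lintegral_countable']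
        gcongr

lemma relEnt_eq_top_of_discEntropy_fst_eq_top [Countable β] [IsProbabilityMeasure W]
    (hent : discEntropy W.fst = ⊤) {g : ℕ × β → ℝ} (hg : ∀ z, 0 < g z)
    (hg_sum : ∀ y, ∑' x, ENNReal.ofReal (g (x, y)) ≤ 1)
    (hg_int : ∫⁻ z, ENNReal.ofReal (Real.log (g z)⁻¹) ∂W ≠ ⊤) :
    relEnt W (W.fst.prod W.snd) = ⊤ := by
  by_contra hfin
  obtain ⟨hac, hint⟩ : W ≪ W.fst.prod W.snd ∧ Integrable (llr W (W.fst.prod W.snd)) W := by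
    by_contra h
    exact hfin (if_neg h)
  have hbound := discEntropy_fst_le W hac hg hg_sum
  rw [hent, top_le_iff] at hbound
  exact ENNReal.add_ne_top.2 ⟨ENNReal.add_ne_top.2 ⟨hint.2.ne, ENNReal.one_ne_top⟩, hg_int⟩ hbound

end Coupling

def geomKernel (z : ℕ × ℕ) : ℝ := 2⁻¹ ^ (Nat.dist z.1 z.2 + 2)

lemma geomKernel_pos (z : ℕ × ℕ) : 0 < geomKernel z := by
  unfold geomKernel; positivity

lemma tsum_geomKernel_le_one (y : ℕ) : ∑' x, ENNReal.ofReal (geomKernel (x, y)) ≤ 1 := by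
  have hinj : Function.Injective fun x : ℕ => (Nat.dist x y, decide (y ≤ x)) := by
    intro x x' h
    simp only [Prod.mk.injEq, decide_eq_decide] at h
    unfold Nat.dist at h
    omega
  calc ∑' x, ENNReal.ofReal (geomKernel (x, y))
      = ∑' x, (2⁻¹ : ℝ≥0∞) ^ (Nat.dist x y + 2) := by
        congr with x
        rw [geomKernel, ENNReal.ofReal_pow (by norm_num), ENNReal.ofReal_inv_of_pos two_pos,
          ENNReal.ofReal_ofNat]
    _ ≤ ∑' p : ℕ × Bool, (2⁻¹ : ℝ≥0∞) ^ (p.1 + 2) :=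
        ENNReal.tsum_comp_le_tsum_of_injective hinj fun p => (2⁻¹ : ℝ≥0∞) ^ (p.1 + 2)
    _ = 1 := by
        rw [ENNReal.tsum_prod']
        simp only [tsum_bool, pow_add, ENNReal.tsum_add, ENNReal.tsum_mul_right,
          ENNReal.tsum_geometric_two]
        rw [← two_mul, ← mul_assoc, ← sq, ← ENNReal.inv_pow]
        exact ENNReal.mul_inv_cancel (by simp) (by simp)

lemma log_inv_geomKernel (z : ℕ × ℕ) :
    Real.log (geomKernel z)⁻¹ = (|(z.1 : ℝ) - z.2| + 2) * Real.log 2 := by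
  have hdist : (Nat.dist z.1 z.2 : ℝ) = |(z.1 : ℝ) - z.2| := by
    rcases le_total z.1 z.2 with h | h
    · rw [Nat.dist_eq_sub_of_le h, Nat.cast_sub h, abs_sub_comm, abs_of_nonneg (by simpa)]
    · rw [Nat.dist_comm, Nat.dist_eq_sub_of_le h, Nat.cast_sub h, abs_of_nonneg (by simpa)]
  rw [geomKernel, inv_pow, inv_inv, Real.log_pow]
  push_cast
  rw [hdist]

lemma relEnt_eq_top_of_lintegral_ne_top {ρ : ℕ → ℕ → ℝ} (hρ : ∀ x y : ℕ, |(x : ℝ) - y| ≤ ρ x y)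
    (W : Measure (ℕ × ℕ)) [IsProbabilityMeasure W] (hent : discEntropy W.fst = ⊤)
    (hW : ∫⁻ z, ENNReal.ofReal (ρ z.1 z.2) ∂W ≠ ⊤) :
    relEnt W (W.fst.prod W.snd) = ⊤ := by
  refine relEnt_eq_top_of_discEntropy_fst_eq_top W hent geomKernel_pos tsum_geomKernel_le_one ?_
  have hbound : ∀ z : ℕ × ℕ, ENNReal.ofReal (Real.log (geomKernel z)⁻¹)
      ≤ ENNReal.ofReal (Real.log 2) * (ENNReal.ofReal (ρ z.1 z.2) + 2) := fun z => by
    rw [log_inv_geomKernel, ENNReal.ofReal_mul' (Real.log_nonneg one_le_two), mul_comm]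
    gcongr
    exact ENNReal.ofReal_add_le.trans (by gcongr; exacts [hρ z.1 z.2, by simp])
  refine ne_top_of_le_ne_top ?_ (lintegral_mono hbound)
  rw [lintegral_const_mul' _ _ ENNReal.ofReal_ne_top, lintegral_add_right _ measurable_const]
  simp [ENNReal.mul_eq_top, hW]

lemma Rnp_eq_top_of_discEntropy_eq_top {ρ : ℕ → ℕ → ℝ}
    (hρ : ∀ x y : ℕ, |(x : ℝ) - y| ≤ ρ x y) {P : Measure ℕ} (hent : discEntropy P = ⊤) (D : ℝ) :
    Rnp ρ P D = ⊤ := by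
  simp only [Rnp, iInf_eq_top]
  rintro W ⟨hW, rfl, hD⟩
  exact relEnt_eq_top_of_lintegral_ne_top hρ W hent (ne_top_of_le_ne_top ENNReal.ofReal_ne_top hD)

lemma fst_map_diag {α : Type*} [MeasurableSpace α] (P : Measure α) :
    (P.map fun x => (x, x)).fst = P :=
  (Measure.fst_map_prodMk measurable_id).trans Measure.map_id

lemma snd_map_diag {α : Type*} [MeasurableSpace α] (P : Measure α) :
    (P.map fun x => (x, x)).snd = P :=
  (Measure.snd_map_prodMk measurable_id).trans Measure.map_id

lemma relEnt_map_diag_le (P : Measure ℕ) [IsProbabilityMeasure P] :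
    relEnt (P.map fun x => (x, x)) (P.prod P) ≤ discEntropy P := by
  rcases eq_or_ne (discEntropy P) ⊤ with htop | hfin
  · simp [htop]
  set W := P.map fun x => (x, x)
  have hdiag : Measurable fun x : ℕ => (x, x) := measurable_of_countable _
  have hac : W ≪ P.prod P := by
    simpa [W, fst_map_diag, snd_map_diag] using absolutelyContinuous_fst_prod_snd W
  have hatom : ∀ x, W {(x, x)} = P {x} := fun x => by
    rw [Measure.map_apply hdiag (measurableSet_singleton _)]
    congr 1 with y
    simp
  have hllr : llr W (P.prod P) =ᵐ[W] fun z => Real.log (P {z.1}).toReal⁻¹ := by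
    rw [Filter.EventuallyEq, ae_map_iff hdiag.aemeasurable (MeasurableSet.of_discrete),
      ae_iff_of_countable]
    intro x hx
    have hx2 : P.prod P {(x, x)} = P {x} * P {x} := by
      rw [← Set.singleton_prod_singleton, Measure.prod_prod]
    rw [llr_eq_log_measure_singleton_div hac (by simp [hx2, hx]), hatom, hx2, ENNReal.toReal_mul,
      div_mul_cancel_left₀ (ENNReal.toReal_pos hx (measure_ne_top _ _)).ne']
  have hent : ∫⁻ z, ENNReal.ofReal (Real.log (P {z.1}).toReal⁻¹) ∂W = discEntropy P := by
    rw [discEntropy_eq_lintegral, lintegral_map (measurable_of_countable _) hdiag]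
  have hnonneg : ∀ z : ℕ × ℕ, 0 ≤ Real.log (P {z.1}).toReal⁻¹ := fun z =>
    Real.log_inv (P {z.1}).toReal ▸
      neg_nonneg.2 (Real.log_nonpos ENNReal.toReal_nonneg measureReal_le_one)
  rw [relEnt_eq_lintegral_of_llr_ae_eq hac hnonneg (measurable_of_countable _).aestronglyMeasurable
    hllr (hent ▸ hfin), hent]

lemma Rnp_le_discEntropy {ρ : ℕ → ℕ → ℝ} (hρ : ∀ x, ρ x x = 0) (P : Measure ℕ)
    [IsProbabilityMeasure P] (D : ℝ) : Rnp ρ P D ≤ discEntropy P := by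
  set W := P.map fun x => (x, x)
  have hdiag : Measurable fun x : ℕ => (x, x) := measurable_of_countable _
  have hW : W ∈ Wset ρ P D := by
    refine ⟨Measure.isProbabilityMeasure_map hdiag.aemeasurable, fst_map_diag P, ?_⟩
    simp [W, lintegral_map (measurable_of_countable _) hdiag, hρ]
  calc Rnp ρ P D ≤ relEnt W (W.fst.prod W.snd) := iInf₂_le W hW
    _ ≤ discEntropy P := by
        rw [fst_map_diag, snd_map_diag]
        exact relEnt_map_diag_le P

section Mixture

variable {α : Type*} [MeasurableSpace α] (P P' : Measure α) {ε : ℝ}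

lemma toReal_mixture_apply [IsFiniteMeasure P] [IsFiniteMeasure P'] (hε : ε ∈ Icc (0 : ℝ) 1)
    (C : Set α) :
    ((ENNReal.ofReal (1 - ε) • P + ENNReal.ofReal ε • P') C).toReal
      = (1 - ε) * (P C).toReal + ε * (P' C).toReal := by
  simp only [Measure.coe_add, Measure.coe_smul, Pi.add_apply, Pi.smul_apply, smul_eq_mul]
  rw [ENNReal.toReal_add (by finiteness) (by finiteness), ENNReal.toReal_mul, ENNReal.toReal_mul,
    ENNReal.toReal_ofReal (by linarith [hε.2]), ENNReal.toReal_ofReal hε.1]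

lemma abs_mixture_sub_le [IsProbabilityMeasure P] [IsProbabilityMeasure P']
    (hε : ε ∈ Icc (0 : ℝ) 1) (C : Set α) :
    |((ENNReal.ofReal (1 - ε) • P + ENNReal.ofReal ε • P') C).toReal - (P C).toReal| ≤ ε := by
  rw [toReal_mixture_apply P P' hε, show ∀ a b : ℝ, (1 - ε) * a + ε * b - a = ε * (b - a) by
    intros; ring, abs_mul, abs_of_nonneg hε.1]
  have hP : (P C).toReal ≤ 1 := measureReal_le_one
  have hP' : (P' C).toReal ≤ 1 := measureReal_le_one
  refine mul_le_of_le_one_right hε.1 (abs_sub_le_iff.2 ⟨?_, ?_⟩) <;>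
    linarith [(P C).toReal_nonneg, (P' C).toReal_nonneg]

lemma tendsto_iSup_abs_mixture_sub [IsProbabilityMeasure P] [IsProbabilityMeasure P'] :
    Tendsto (fun ε : ℝ => ⨆ C : Set α,
      |((ENNReal.ofReal (1 - ε) • P + ENNReal.ofReal ε • P') C).toReal - (P C).toReal|)
      (𝓝[>] 0) (𝓝 0) := by
  refine squeeze_zero' ?_ ?_ (tendsto_id.mono_left nhdsWithin_le_nhds)
  · exact Eventually.of_forall fun ε => Real.iSup_nonneg fun C => abs_nonneg _
  · filter_upwards [Ioo_mem_nhdsGT one_pos] with ε hε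
    exact Real.iSup_le (abs_mixture_sub_le P P' (Ioo_subset_Icc_self hε)) hε.1.le

end Mixture

lemma ofReal_mul_discEntropy_le_mixture (P P' : Measure ℕ) [IsProbabilityMeasure P]
    [IsProbabilityMeasure P'] {ε : ℝ} (hε : ε ∈ Icc (0 : ℝ) 1) :
    ENNReal.ofReal ε * discEntropy P'
      ≤ discEntropy (ENNReal.ofReal (1 - ε) • P + ENNReal.ofReal ε • P') := by
  rw [discEntropy, discEntropy, ← ENNReal.tsum_mul_left]
  refine ENNReal.tsum_le_tsum fun x => ?_
  rw [← ENNReal.ofReal_mul hε.1, toReal_mixture_apply P P' hε]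
  refine ENNReal.ofReal_le_ofReal ?_
  have hconcave := Real.concaveOn_negMulLog.2 (mem_Ici.2 (measureReal_nonneg (μ := P) (s := {x})))
    (mem_Ici.2 (measureReal_nonneg (μ := P') (s := {x}))) (sub_nonneg.2 hε.2) hε.1 (by ring)
  have hP := Real.negMulLog_nonneg (measureReal_nonneg (μ := P) (s := {x})) measureReal_le_one
  simp only [smul_eq_mul, measureReal_def] at hconcave hP
  nlinarith [sub_nonneg.2 hε.2]

lemma discEntropy_mixture_eq_top (P P' : Measure ℕ) [IsProbabilityMeasure P]
    [IsProbabilityMeasure P'] (hent : discEntropy P' = ⊤) {ε : ℝ} (hε : ε ∈ Ioo (0 : ℝ) 1) :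
    discEntropy (ENNReal.ofReal (1 - ε) • P + ENNReal.ofReal ε • P') = ⊤ := by
  have h := ofReal_mul_discEntropy_le_mixture P P' (Ioo_subset_Icc_self hε)
  rwa [hent, ENNReal.mul_top (by simpa using hε.1), top_le_iff] at h

theorem csiszar_discontinuity_example_general
    (P' : Measure ℕ) [IsProbabilityMeasure P']
    (hent : discEntropy P' = ⊤)
    (ρ : ℕ → ℕ → ℝ)
    (hρ : ∀ x y : ℕ,
      ρ x y = (if x = y then 0 else ((P' {x}).toReal)⁻¹) + |(x : ℝ) - (y : ℝ)|) :
    (∀ W : Measure (ℕ × ℕ), IsProbabilityMeasure W → W.fst = P' →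
      (∫⁻ p, ENNReal.ofReal (ρ p.1 p.2) ∂W) ≠ ⊤ →
      relEnt W (W.fst.prod W.snd) = ⊤)
    ∧ (∀ D : ℝ, 0 ≤ D → Rnp ρ P' D = ⊤)
    ∧ (∀ P : Measure ℕ, IsProbabilityMeasure P → discEntropy P ≠ ⊤ → ∀ D : ℝ, 0 ≤ D →
        (∀ ε ∈ Set.Ioo (0:ℝ) 1,
          Rnp ρ (ENNReal.ofReal (1 - ε) • P + ENNReal.ofReal ε • P') D = ⊤)
        ∧ Rnp ρ P D ≤ discEntropy P
        ∧ Tendsto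
            (fun ε : ℝ => ⨆ C : Set ℕ,
              |(((ENNReal.ofReal (1 - ε) • P + ENNReal.ofReal ε • P') C).toReal
                - (P C).toReal)|)
            (𝓝[>] (0:ℝ)) (𝓝 0)) := by
  have hρ_ge : ∀ x y : ℕ, |(x : ℝ) - y| ≤ ρ x y := fun x y => by
    have : (0 : ℝ) ≤ if x = y then 0 else ((P' {x}).toReal)⁻¹ := by split_ifs <;> positivity
    linarith [hρ x y]
  have hρ_diag : ∀ x, ρ x x = 0 := fun x => by simp [hρ]
  refine ⟨fun W _ hfst hW => relEnt_eq_top_of_lintegral_ne_top hρ_ge W (hfst ▸ hent) hW,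
    fun D _ => Rnp_eq_top_of_discEntropy_eq_top hρ_ge hent D,
    fun P _ _ D _ => ⟨fun ε hε => ?_, Rnp_le_discEntropy hρ_diag P D,
      tendsto_iSup_abs_mixture_sub P P'⟩⟩
  exact Rnp_eq_top_of_discEntropy_eq_top hρ_ge (discEntropy_mixture_eq_top P P' hent hε) D

/-- Csiszár's example: with `ρ(x,y) = P'(x)⁻¹·1{x≠y} + |x−y|` for a
distribution `P'` of infinite entropy charging every point: (i) every coupling `W` with
first marginal `P'` and finite expected distortion has `H(W‖W^A × W^Â) = ∞`, hence
`R₁(P',D) = ∞` for all `D ≥ 0`; (ii) for any `P` of finite entropy, the mixtures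
`P_ε = (1−ε)P + εP'` converge to `P` in total variation while `R₁(P_ε,D) = ∞` for all
`ε ∈ (0,1)` and `R₁(P,D) ≤ H(P) < ∞`, exhibiting the discontinuity of `R₁(·,D)`. -/
theorem csiszar_discontinuity_example
    (P' : Measure ℕ) [IsProbabilityMeasure P']
    (hpos : ∀ x : ℕ, P' {x} ≠ 0)
    (hent : discEntropy P' = ⊤)
    (ρ : ℕ → ℕ → ℝ)
    (hρ : ∀ x y : ℕ,
      ρ x y = (if x = y then 0 else ((P' {x}).toReal)⁻¹) + |(x : ℝ) - (y : ℝ)|) :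
    (∀ W : Measure (ℕ × ℕ), IsProbabilityMeasure W → W.fst = P' →
      (∫⁻ p, ENNReal.ofReal (ρ p.1 p.2) ∂W) ≠ ⊤ →
      relEnt W (W.fst.prod W.snd) = ⊤)
    ∧ (∀ D : ℝ, 0 ≤ D → Rnp ρ P' D = ⊤)
    ∧ (∀ P : Measure ℕ, IsProbabilityMeasure P → discEntropy P ≠ ⊤ → ∀ D : ℝ, 0 ≤ D →
        (∀ ε ∈ Set.Ioo (0:ℝ) 1,
          Rnp ρ (ENNReal.ofReal (1 - ε) • P + ENNReal.ofReal ε • P') D = ⊤)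
        ∧ Rnp ρ P D ≤ discEntropy P
        ∧ Tendsto
            (fun ε : ℝ => ⨆ C : Set ℕ,
              |(((ENNReal.ofReal (1 - ε) • P + ENNReal.ofReal ε • P') C).toReal
                - (P C).toReal)|)
            (𝓝[>] (0:ℝ)) (𝓝 0)) :=
  csiszar_discontinuity_example_general P' hent ρ hρ
end
end

section
/- Let A = {0,1}, Â = {0}, and ρ(x,y) := |x − y|. Then: (i) for any probability distribution P' on A, R₁(P', D) = 0 if P'(1) ≤ D and R₁(P', D) = ∞ otherwise. (ii) If (Xₙ; n≥1) are i.i.d. with P(X₁ = 1) = p ∈ (0,1), then at the distortion level D = p (which does not belong to D_c(P)), with probability 1 the plug-in estimator fails to converge: liminf_{n→∞} R₁(P_{X₁ⁿ}, p) = 0 while limsup_{n→∞} R₁(P_{X₁ⁿ}, p) = ∞. -/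
open MeasureTheory ProbabilityTheory Filter Topology Set
open scoped ENNReal NNReal

noncomputable section

/-!
Since `Â` is a single point, every coupling `W` with first marginal `P` is `P ⊗ δ₀`, which is
the product of its marginals; so `R₁(P, D)` is `0` if `P ⊗ δ₀` meets the distortion constraint
`P(1) ≤ D` and `∞` otherwise. Hence `R₁(P, ·)` jumps from `∞` to `0` at `D = p`, and
`R₁(P_{X₁ⁿ}, p)` is `0` or `∞` according to the sign of the centered walk
`Sₙ = ∑_{k<n} (1{X_k = 1} - p)`. This walk is a martingale whose increments have absolute value
in `[min(p, 1-p), 1]`, so it cannot converge; by the one-sided martingale bound it is therefore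
almost surely unbounded above and below, i.e. it changes sign infinitely often.
-/

section UniqueReproduction

variable {A B : Type*} [MeasurableSpace A] [MeasurableSpace B] [Unique B]

theorem MeasureTheory.Measure.eq_dirac_default (ν : Measure B) [IsProbabilityMeasure ν] :
    ν = Measure.dirac default := by
  ext s hs
  by_cases h : default ∈ s
  · obtain rfl : s = univ := eq_univ_of_forall fun b => Unique.eq_default b ▸ h
    simp
  · obtain rfl : s = ∅ := eq_empty_of_forall_notMem fun b hb => h (Unique.eq_default b ▸ hb)
    simp

theorem MeasureTheory.Measure.map_prodMk_default_fst (W : Measure (A × B)) :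
    W.fst.map (fun a => (a, default)) = W := by
  rw [Measure.fst, Measure.map_map measurable_prodMk_right measurable_fst]
  convert Measure.map_id
  exact funext fun q => Prod.ext rfl (Unique.eq_default q.2).symm

theorem MeasureTheory.Measure.fst_prod_snd_of_unique (W : Measure (A × B))
    [IsProbabilityMeasure W] :
    W.fst.prod W.snd = W := by
  rw [Measure.eq_dirac_default W.snd, Measure.prod_dirac, Measure.map_prodMk_default_fst]

theorem lintegral_distortion_of_unique {ρ : A → B → ℝ} (hρ : Measurable fun a => ρ a default)
    (W : Measure (A × B)) :
    ∫⁻ q, ENNReal.ofReal (ρ q.1 q.2) ∂W = ∫⁻ a, ENNReal.ofReal (ρ a default) ∂W.fst := by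
  rw [Measure.fst, lintegral_map hρ.ennreal_ofReal measurable_fst]
  simp only [Unique.eq_default]

theorem relEnt_self {X : Type*} [MeasurableSpace X] (ν : Measure X) [SigmaFinite ν] :
    relEnt ν ν = 0 := by
  have hllr : llr ν ν =ᵐ[ν] 0 := by
    filter_upwards [ν.rnDeriv_self] with x hx
    simp [llr, hx]
  rw [relEnt, if_pos ⟨Measure.AbsolutelyContinuous.rfl, (integrable_zero _ _ _).congr hllr.symm⟩,
    integral_congr_ae hllr, Pi.zero_def, integral_zero, ENNReal.ofReal_zero]

theorem Rnp_eq_zero_of_unique {ρ : A → B → ℝ} (hρ : Measurable fun a => ρ a default)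
    (P : Measure A) [IsProbabilityMeasure P] {D : ℝ}
    (hD : ∫⁻ a, ENNReal.ofReal (ρ a default) ∂P ≤ ENNReal.ofReal D) : Rnp ρ P D = 0 := by
  have hmk : Measurable fun a : A => (a, (default : B)) := measurable_prodMk_right
  set W := P.map fun a => (a, (default : B))
  have : IsProbabilityMeasure W := Measure.isProbabilityMeasure_map hmk.aemeasurable
  have hfst : W.fst = P := by
    rw [Measure.fst, Measure.map_map measurable_fst hmk]
    exact Measure.map_id
  have hW : W ∈ Wset ρ P D :=
    ⟨inferInstance, hfst, by rwa [lintegral_distortion_of_unique hρ, hfst]⟩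
  refine le_antisymm ?_ bot_le
  calc Rnp ρ P D ≤ relEnt W (W.fst.prod W.snd) := iInf₂_le W hW
    _ = 0 := by rw [Measure.fst_prod_snd_of_unique, relEnt_self]

theorem Rnp_eq_top_of_unique {ρ : A → B → ℝ} (hρ : Measurable fun a => ρ a default)
    (P : Measure A) {D : ℝ} (hD : ¬ ∫⁻ a, ENNReal.ofReal (ρ a default) ∂P ≤ ENNReal.ofReal D) :
    Rnp ρ P D = ⊤ := by
  refine iInf₂_eq_top.2 fun W ⟨_, hfst, hdist⟩ => absurd ?_ hD
  rwa [lintegral_distortion_of_unique hρ, hfst] at hdist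

end UniqueReproduction

theorem notMem_DcNp_of_jump {A B : Type*} [MeasurableSpace A] [MeasurableSpace B]
    {ρ : A → B → ℝ} {P : Measure A} {D : ℝ} (hD : D ≠ 0) (h0 : Rnp ρ P D = 0)
    (htop : ∀ l ∈ Ioo (0 : ℝ) 1, Rnp ρ P (l * D) = ⊤) : D ∉ DcNp ρ P := by
  rintro ⟨-, hD0 | hDtop | hleft⟩
  · exact hD hD0
  · simp [h0] at hDtop
  · rw [h0, iInf₂_eq_top.2 htop] at hleft
    exact ENNReal.zero_ne_top hleft

section EmpiricalMeasure

variable {A : Type*} [MeasurableSpace A]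

theorem empMeas_apply_eq (x : ℕ → A) (n : ℕ) {s : Set A} (hs : MeasurableSet s) :
    empMeas x n s =
      (n : ℝ≥0∞)⁻¹ * ENNReal.ofReal (∑ k ∈ Finset.range n, s.indicator 1 (x k)) := by
  have hind : ∀ a, 0 ≤ s.indicator (1 : A → ℝ) a := Set.indicator_nonneg fun _ _ => zero_le_one
  rw [empMeas, Measure.smul_apply, Measure.finsetSum_apply, smul_eq_mul,
    ENNReal.ofReal_sum_of_nonneg fun k _ => hind (x k)]
  congr 1
  refine Finset.sum_congr rfl fun k _ => ?_
  rw [Measure.dirac_apply' _ hs]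
  by_cases h : x k ∈ s <;> simp [h]

theorem isProbabilityMeasure_empMeas (x : ℕ → A) {n : ℕ} (hn : n ≠ 0) :
    IsProbabilityMeasure (empMeas x n) := by
  constructor
  rw [empMeas_apply_eq x n MeasurableSet.univ]
  simp only [Set.indicator_univ, Pi.one_apply, Finset.sum_const, Finset.card_range, nsmul_eq_mul,
    mul_one, ENNReal.ofReal_natCast]
  exact ENNReal.inv_mul_cancel (by exact_mod_cast hn) (ENNReal.natCast_ne_top n)

theorem empMeas_le_ofReal_iff (x : ℕ → A) {n : ℕ} (hn : n ≠ 0) {s : Set A}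
    (hs : MeasurableSet s) {p : ℝ} (hp : 0 ≤ p) :
    empMeas x n s ≤ ENNReal.ofReal p ↔ ∑ k ∈ Finset.range n, (s.indicator 1 (x k) - p) ≤ 0 := by
  have hn' : (n : ℝ≥0∞) ≠ 0 := by exact_mod_cast hn
  rw [empMeas_apply_eq x n hs, mul_comm, ← div_eq_mul_inv,
    ENNReal.div_le_iff_le_mul (Or.inl hn') (Or.inl (ENNReal.natCast_ne_top n)),
    ← ENNReal.ofReal_natCast n, ← ENNReal.ofReal_mul hp,
    ENNReal.ofReal_le_ofReal_iff (by positivity), Finset.sum_sub_distrib, Finset.sum_const,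
    Finset.card_range, nsmul_eq_mul, sub_nonpos, mul_comm]

end EmpiricalMeasure

def binaryAbsDist : Fin 2 → Fin 1 → ℝ := fun x y => |((x : ℕ) : ℝ) - ((y : ℕ) : ℝ)|

theorem lintegral_binaryAbsDist (P : Measure (Fin 2)) :
    ∫⁻ a, ENNReal.ofReal (binaryAbsDist a default) ∂P = P {1} := by
  simp [lintegral_fintype, binaryAbsDist]

theorem Rnp_binaryAbsDist_eq_zero (P : Measure (Fin 2)) [IsProbabilityMeasure P] {D : ℝ}
    (hD : P {1} ≤ ENNReal.ofReal D) : Rnp binaryAbsDist P D = 0 :=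
  Rnp_eq_zero_of_unique (measurable_of_countable _) P (by rwa [lintegral_binaryAbsDist])

theorem Rnp_binaryAbsDist_eq_top (P : Measure (Fin 2)) {D : ℝ}
    (hD : ¬ P {1} ≤ ENNReal.ofReal D) : Rnp binaryAbsDist P D = ⊤ :=
  Rnp_eq_top_of_unique (measurable_of_countable _) P (by rwa [lintegral_binaryAbsDist])

theorem Rnp_binaryAbsDist_empMeas_eq_zero (x : ℕ → Fin 2) {n : ℕ} {p : ℝ} (hp : 0 ≤ p)
    (hneg : ∑ k ∈ Finset.range n, (({1} : Set (Fin 2)).indicator 1 (x k) - p) < 0) :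
    Rnp binaryAbsDist (empMeas x n) p = 0 := by
  have hn : n ≠ 0 := by rintro rfl; simp at hneg
  have := isProbabilityMeasure_empMeas x hn
  exact Rnp_binaryAbsDist_eq_zero _
    ((empMeas_le_ofReal_iff x hn (measurableSet_singleton 1) hp).2 hneg.le)

theorem Rnp_binaryAbsDist_empMeas_eq_top (x : ℕ → Fin 2) {n : ℕ} {p : ℝ} (hp : 0 ≤ p)
    (hpos : 0 < ∑ k ∈ Finset.range n, (({1} : Set (Fin 2)).indicator 1 (x k) - p)) :
    Rnp binaryAbsDist (empMeas x n) p = ⊤ := by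
  have hn : n ≠ 0 := by rintro rfl; simp at hpos
  exact Rnp_binaryAbsDist_eq_top _
    (mt (empMeas_le_ofReal_iff x hn (measurableSet_singleton 1) hp).1 (not_le.2 hpos))

theorem not_exists_tendsto_of_le_abs_sub_succ {u : ℕ → ℝ} {δ : ℝ} (hδ : 0 < δ)
    (hu : ∀ n, δ ≤ |u (n + 1) - u n|) : ¬ ∃ c, Tendsto u atTop (𝓝 c) := by
  rintro ⟨c, hc⟩
  have hdiff : Tendsto (fun n => u (n + 1) - u n) atTop (𝓝 0) := by
    simpa using (hc.comp (tendsto_add_atTop_nat 1)).sub hc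
  obtain ⟨n, hn⟩ := (hdiff.eventually (Metric.ball_mem_nhds 0 hδ)).exists
  rw [Real.dist_eq, sub_zero] at hn
  exact (hu n).not_gt hn

theorem frequently_lt_of_not_bddAbove {β : Type*} [LinearOrder β] {u : ℕ → β}
    (hu : ¬ BddAbove (range u)) (b : β) : ∃ᶠ n in atTop, b < u n := by
  refine fun hle => hu (IsBoundedUnder.bddAbove_range ⟨b, ?_⟩)
  simpa using hle

theorem frequently_gt_of_not_bddBelow {β : Type*} [LinearOrder β] {u : ℕ → β}
    (hu : ¬ BddBelow (range u)) (b : β) : ∃ᶠ n in atTop, u n < b := by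
  refine fun hle => hu (IsBoundedUnder.bddBelow_range ⟨b, ?_⟩)
  simpa using hle

section RandomWalk

variable {Ω : Type*} [MeasurableSpace Ω] {μ : Measure Ω}

theorem MeasureTheory.Martingale.ae_not_bddAbove_and_not_bddBelow [IsFiniteMeasure μ]
    {ℱ : Filtration ℕ ‹MeasurableSpace Ω›} {f : ℕ → Ω → ℝ} (hf : Martingale f ℱ μ) {R : ℝ≥0}
    (hbdd : ∀ᵐ ω ∂μ, ∀ i, |f (i + 1) ω - f i ω| ≤ R) {δ : ℝ} (hδ : 0 < δ)
    (hlow : ∀ᵐ ω ∂μ, ∀ i, δ ≤ |f (i + 1) ω - f i ω|) :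
    ∀ᵐ ω ∂μ, ¬ BddAbove (range fun n => f n ω) ∧ ¬ BddBelow (range fun n => f n ω) := by
  filter_upwards [hf.submartingale.bddAbove_iff_exists_tendsto hbdd,
    hf.bddAbove_range_iff_bddBelow_range hbdd, hlow] with ω hconv habove_iff_below hω
  have habove : ¬ BddAbove (range fun n => f n ω) :=
    hconv.not.2 (not_exists_tendsto_of_le_abs_sub_succ hδ hω)
  exact ⟨habove, habove_iff_below.not.1 habove⟩

theorem ProbabilityTheory.iIndepFun.martingale_sum_range_succ {Y : ℕ → Ω → ℝ}
    (hY : ∀ k, StronglyMeasurable (Y k)) (hind : iIndepFun Y μ) (hint : ∀ k, Integrable (Y k) μ)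
    (hmean : ∀ k, μ[Y k] = 0) :
    Martingale (fun n ω => ∑ k ∈ Finset.range (n + 1), Y k ω) (Filtration.natural Y hY) μ := by
  have := hind.isProbabilityMeasure
  refine martingale_of_condExp_sub_eq_zero_nat (fun n => ?_)
    (fun n => integrable_finsetSum _ fun k _ => hint k) (fun n => ?_)
  · refine Finset.stronglyMeasurable_fun_sum _ fun k hk => ?_
    exact (Filtration.stronglyAdapted_natural hY k).mono
      ((Filtration.natural Y hY).mono (Finset.mem_range_succ_iff.1 hk))
  · have hincr : (fun ω => ∑ k ∈ Finset.range (n + 1 + 1), Y k ω)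
        - (fun ω => ∑ k ∈ Finset.range (n + 1), Y k ω) = Y (n + 1) := by
      funext ω
      exact Finset.sum_range_succ_sub_sum _
    filter_upwards [hind.condExp_natural_ae_eq_of_lt hY n.lt_succ_self] with ω hω
    rw [hincr, hω, hmean, Pi.zero_apply]

theorem ProbabilityTheory.iIndepFun.ae_frequently_sum_range_pos_and_neg {Y : ℕ → Ω → ℝ}
    (hY : ∀ k, Measurable (Y k)) (hind : iIndepFun Y μ) (hmean : ∀ k, μ[Y k] = 0) {R : ℝ≥0}
    (hbdd : ∀ k ω, |Y k ω| ≤ R) {δ : ℝ} (hδ : 0 < δ) (hlow : ∀ k ω, δ ≤ |Y k ω|) :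
    ∀ᵐ ω ∂μ, (∃ᶠ n in atTop, 0 < ∑ k ∈ Finset.range n, Y k ω)
      ∧ ∃ᶠ n in atTop, ∑ k ∈ Finset.range n, Y k ω < 0 := by
  have := hind.isProbabilityMeasure
  have hint (k : ℕ) : Integrable (Y k) μ :=
    .of_bound (hY k).aestronglyMeasurable R
      (ae_of_all _ fun ω => (Real.norm_eq_abs _).le.trans (hbdd k ω))
  have hmart := hind.martingale_sum_range_succ (fun k => (hY k).stronglyMeasurable) hint hmean
  have hincr (ω : Ω) (i : ℕ) :
      ∑ k ∈ Finset.range (i + 1 + 1), Y k ω - ∑ k ∈ Finset.range (i + 1), Y k ω = Y (i + 1) ω :=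
    Finset.sum_range_succ_sub_sum _
  filter_upwards [hmart.ae_not_bddAbove_and_not_bddBelow
    (ae_of_all _ fun ω i => (hincr ω i).symm ▸ hbdd (i + 1) ω) hδ
    (ae_of_all _ fun ω i => (hincr ω i).symm ▸ hlow (i + 1) ω)] with ω ⟨habove, hbelow⟩
  exact ⟨(tendsto_add_atTop_nat 1).frequently (frequently_lt_of_not_bddAbove habove 0),
    (tendsto_add_atTop_nat 1).frequently (frequently_gt_of_not_bddBelow hbelow 0)⟩

theorem ProbabilityTheory.iIndepFun.ae_frequently_sum_indicator_sub_pos_and_neg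
    {A : Type*} [MeasurableSpace A] {X : ℕ → Ω → A}
    (hX : ∀ k, Measurable (X k)) (hind : iIndepFun X μ) {s : Set A} (hs : MeasurableSet s)
    {p : ℝ} (hp : p ∈ Ioo (0 : ℝ) 1) (hps : ∀ k, μ (X k ⁻¹' s) = ENNReal.ofReal p) :
    ∀ᵐ ω ∂μ, (∃ᶠ n in atTop, 0 < ∑ k ∈ Finset.range n, (s.indicator 1 (X k ω) - p))
      ∧ ∃ᶠ n in atTop, ∑ k ∈ Finset.range n, (s.indicator 1 (X k ω) - p) < 0 := by
  have := hind.isProbabilityMeasure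
  have hg : Measurable fun a => s.indicator (1 : A → ℝ) a - p :=
    (measurable_one.indicator hs).sub_const p
  have hmean (k : ℕ) : ∫ ω, (s.indicator 1 (X k ω) - p) ∂μ = 0 := by
    have hint : Integrable (fun ω => s.indicator (1 : A → ℝ) (X k ω)) μ :=
      (integrable_const 1).indicator (hX k hs)
    rw [integral_sub hint (integrable_const p), integral_const, probReal_univ, one_smul,
      sub_eq_zero]
    calc ∫ ω, s.indicator 1 (X k ω) ∂μ = ∫ ω, (X k ⁻¹' s).indicator 1 ω ∂μ := rfl
      _ = p := by
        rw [integral_indicator_one (hX k hs), measureReal_def, hps, ENNReal.toReal_ofReal hp.1.le]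
  have habs (a : A) :
      |s.indicator (1 : A → ℝ) a - p| = 1 - p ∨ |s.indicator (1 : A → ℝ) a - p| = p := by
    by_cases h : a ∈ s <;> simp [h, abs_of_pos hp.1, abs_of_pos (sub_pos.2 hp.2)]
  refine (hind.comp _ fun _ => hg).ae_frequently_sum_range_pos_and_neg
    (fun k => hg.comp (hX k)) hmean (R := 1) (fun k ω => ?_) (lt_min hp.1 (sub_pos.2 hp.2))
    (fun k ω => ?_) <;> rcases habs (X k ω) with h | h <;> simp only [h, NNReal.coe_one]
  · linarith [hp.1]
  · exact hp.2.le
  · exact min_le_right _ _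
  · exact min_le_left _ _

end RandomWalk

theorem convergence_failure_example_general
    {Ω : Type*} [MeasurableSpace Ω] (μ : Measure Ω)
    (X : ℕ → Ω → Fin 2) (hX : ∀ n, Measurable (X n))
    (hindep : iIndepFun X μ)
    (P : Measure (Fin 2)) [IsProbabilityMeasure P]
    (hid : ∀ n, μ.map (X n) = P)
    (p : ℝ) (hp : p ∈ Set.Ioo (0:ℝ) 1) (hP1 : P {1} = ENNReal.ofReal p) :
    (∀ (P' : Measure (Fin 2)), IsProbabilityMeasure P' → ∀ D : ℝ, 0 ≤ D →
      ((P' {1} ≤ ENNReal.ofReal D →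
        Rnp (fun (x : Fin 2) (y : Fin 1) => |((x : ℕ) : ℝ) - ((y : ℕ) : ℝ)|) P' D = 0)
      ∧ (¬ P' {1} ≤ ENNReal.ofReal D →
        Rnp (fun (x : Fin 2) (y : Fin 1) => |((x : ℕ) : ℝ) - ((y : ℕ) : ℝ)|) P' D = ⊤)))
    ∧ p ∉ DcNp (fun (x : Fin 2) (y : Fin 1) => |((x : ℕ) : ℝ) - ((y : ℕ) : ℝ)|) P
    ∧ (∀ᵐ ω ∂μ,
        liminf
          (fun n => Rnp (fun (x : Fin 2) (y : Fin 1) => |((x : ℕ) : ℝ) - ((y : ℕ) : ℝ)|)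
            (empMeas (fun k => X k ω) n) p) atTop = 0
        ∧ limsup
          (fun n => Rnp (fun (x : Fin 2) (y : Fin 1) => |((x : ℕ) : ℝ) - ((y : ℕ) : ℝ)|)
            (empMeas (fun k => X k ω) n) p) atTop = ⊤) := by
  have hP : Rnp binaryAbsDist P p = 0 := Rnp_binaryAbsDist_eq_zero P hP1.le
  have hps (k : ℕ) : μ (X k ⁻¹' {1}) = ENNReal.ofReal p := by
    rw [← Measure.map_apply (hX k) (measurableSet_singleton 1), hid k, hP1]
  refine ⟨fun P' _ D _ => ⟨Rnp_binaryAbsDist_eq_zero P', Rnp_binaryAbsDist_eq_top P'⟩, ?_, ?_⟩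
  · refine notMem_DcNp_of_jump hp.1.ne' hP fun l hl => Rnp_binaryAbsDist_eq_top P ?_
    rw [hP1, not_le, ENNReal.ofReal_lt_ofReal_iff hp.1]
    exact mul_lt_of_lt_one_left hp.1 hl.2
  · filter_upwards [hindep.ae_frequently_sum_indicator_sub_pos_and_neg hX
      (measurableSet_singleton 1) hp hps] with ω ⟨hpos, hneg⟩
    exact ⟨le_antisymm (liminf_le_of_frequently_le (hneg.mono fun n hn =>
        (Rnp_binaryAbsDist_empMeas_eq_zero _ hp.1.le hn).le)) bot_le,
      top_unique (le_limsup_of_frequently_le (hpos.mono fun n hn =>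
        (Rnp_binaryAbsDist_empMeas_eq_top _ hp.1.le hn).ge))⟩

/-- Convergence failure at `D ∉ D_c(P)`: with `A = {0,1}`, `Â = {0}`
and `ρ(x,y) = |x−y|`: (i) `R₁(P',D) = 0` if `P'(1) ≤ D` and `= ∞` otherwise; (ii) for an
i.i.d. source with `P(X₁=1) = p ∈ (0,1)`, at `D = p` (which is not in `D_c(P)`), with
probability 1 the plug-in estimator fails to converge:
`liminf_n R₁(P_{X₁ⁿ},p) = 0` while `limsup_n R₁(P_{X₁ⁿ},p) = ∞`. -/
theorem convergence_failure_example
    {Ω : Type*} [MeasurableSpace Ω] (μ : Measure Ω) [IsProbabilityMeasure μ]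
    (X : ℕ → Ω → Fin 2) (hX : ∀ n, Measurable (X n))
    (hindep : iIndepFun X μ)
    (P : Measure (Fin 2)) [IsProbabilityMeasure P]
    (hid : ∀ n, μ.map (X n) = P)
    (p : ℝ) (hp : p ∈ Set.Ioo (0:ℝ) 1) (hP1 : P {1} = ENNReal.ofReal p) :
    (∀ (P' : Measure (Fin 2)), IsProbabilityMeasure P' → ∀ D : ℝ, 0 ≤ D →
      ((P' {1} ≤ ENNReal.ofReal D →
        Rnp (fun (x : Fin 2) (y : Fin 1) => |((x : ℕ) : ℝ) - ((y : ℕ) : ℝ)|) P' D = 0)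
      ∧ (¬ P' {1} ≤ ENNReal.ofReal D →
        Rnp (fun (x : Fin 2) (y : Fin 1) => |((x : ℕ) : ℝ) - ((y : ℕ) : ℝ)|) P' D = ⊤)))
    ∧ p ∉ DcNp (fun (x : Fin 2) (y : Fin 1) => |((x : ℕ) : ℝ) - ((y : ℕ) : ℝ)|) P
    ∧ (∀ᵐ ω ∂μ,
        liminf
          (fun n => Rnp (fun (x : Fin 2) (y : Fin 1) => |((x : ℕ) : ℝ) - ((y : ℕ) : ℝ)|)
            (empMeas (fun k => X k ω) n) p) atTop = 0
        ∧ limsup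
          (fun n => Rnp (fun (x : Fin 2) (y : Fin 1) => |((x : ℕ) : ℝ) - ((y : ℕ) : ℝ)|)
            (empMeas (fun k => X k ω) n) p) atTop = ⊤) :=
  convergence_failure_example_general μ X hX hindep P hid p hp hP1
end
end
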